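/- arXiv:2009.05733 — 3 statements merged into one kernel-verified Lean document; each statement's English description precedes it below -/
import Mathlib

section
/- Let a < b be real numbers and let y₀ ∈ [a,b]. Let φ : [a,b] → ℝ be such that there exists φ' ∈ L²(a,b) with φ(x) = φ(a) + ∫_a^x φ'(t) dt for all x ∈ [a,b], and assume φ(y₀) = 0. Then ∫_a^b φ(y)²/(y−y₀)² dy + (1/max(b−y₀, y₀−a)) · ∫_a^b φ(y)²/|y−y₀| dy ≤ 4 ∫_a^b φ'(y)² dy; in particular both integrals on the left are finite. -/
/-!
Split `(a, b)` at `y₀` and move each half to `(0, ℓ)`, with `ℓ ≤ M := max (b - y₀) (y₀ - a)`,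
by a translation or a reflection; there `φ` becomes `F y = ∫₀^y f`. Cauchy–Schwarz with the
weight `√t` gives `F(y)² ≤ 2√y ∫₀^y √t f(t)² dt`. Multiplying by `y⁻² + (M y)⁻¹`, integrating
over `(0, ℓ)` and exchanging the order of integration leaves `√t f(t)²` against
`∫_t^ℓ 2√y (y⁻² + (M y)⁻¹) dy = 4/√t - 4/√ℓ + 4(√ℓ - √t)/M ≤ 4/√t`, the last step because
`ℓ ≤ M`. All estimates are made for `ℝ≥0∞`-valued Lebesgue integrals, so the finiteness of
the left-hand side comes out of the same computation.
-/

open MeasureTheory Set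
open scoped ENNReal

theorem sq_lintegral_le_lintegral_inv_mul_lintegral {α : Type*} [MeasurableSpace α]
    {μ : Measure α} {f w : α → ℝ≥0∞} (hf : AEMeasurable f μ) (hw : AEMeasurable w μ)
    (hw₀ : ∀ᵐ x ∂μ, w x ≠ 0) (hw_top : ∀ᵐ x ∂μ, w x ≠ ∞) :
    (∫⁻ x, f x ∂μ) ^ 2 ≤ (∫⁻ x, (w x)⁻¹ ∂μ) * ∫⁻ x, w x * f x ^ 2 ∂μ := by
  set u : α → ℝ≥0∞ := fun x => (w x)⁻¹ ^ (1 / 2 : ℝ)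
  set v : α → ℝ≥0∞ := fun x => (w x * f x ^ 2) ^ (1 / 2 : ℝ)
  have hf_eq : ∀ᵐ x ∂μ, f x = (u * v) x := by
    filter_upwards [hw₀, hw_top] with x h₀ h_top
    rw [Pi.mul_apply, ← ENNReal.mul_rpow_of_nonneg _ _ (by norm_num), ← mul_assoc,
      ENNReal.inv_mul_cancel h₀ h_top, one_mul, ← ENNReal.rpow_two, ← ENNReal.rpow_mul]
    norm_num
  have hu : ∀ x, u x ^ (2 : ℝ) = (w x)⁻¹ := fun x => by rw [← ENNReal.rpow_mul]; norm_num
  have hv : ∀ x, v x ^ (2 : ℝ) = w x * f x ^ 2 := fun x => by rw [← ENNReal.rpow_mul]; norm_num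
  have hölder := ENNReal.lintegral_mul_le_Lp_mul_Lq μ Real.HolderConjugate.two_two
    (by fun_prop : AEMeasurable u μ) (by fun_prop : AEMeasurable v μ)
  simp only [hu, hv] at hölder
  rw [lintegral_congr_ae hf_eq]
  calc (∫⁻ x, (u * v) x ∂μ) ^ 2
      ≤ ((∫⁻ x, (w x)⁻¹ ∂μ) ^ (1 / 2 : ℝ) * (∫⁻ x, w x * f x ^ 2 ∂μ) ^ (1 / 2 : ℝ)) ^ 2 := by
        gcongr
    _ = _ := by
        rw [mul_pow, ← ENNReal.rpow_natCast, ← ENNReal.rpow_natCast (_ ^ _), ← ENNReal.rpow_mul,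
          ← ENNReal.rpow_mul]
        norm_num

theorem lintegral_Ioo_eq_ofReal_sub_of_hasDerivAt {F F' : ℝ → ℝ} {a b : ℝ} (hab : a ≤ b)
    (hcont : ContinuousOn F (Icc a b)) (hderiv : ∀ x ∈ Ioo a b, HasDerivAt F (F' x) x)
    (hpos : ∀ x ∈ Ioo a b, 0 ≤ F' x) :
    ∫⁻ x in Ioo a b, ENNReal.ofReal (F' x) = ENNReal.ofReal (F b - F a) := by
  have hint : IntegrableOn F' (Ioo a b) :=
    (intervalIntegral.integrableOn_deriv_of_nonneg hcont hderiv hpos).mono_set Ioo_subset_Ioc_self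
  rw [← ofReal_integral_eq_lintegral_ofReal hint ((ae_restrict_iff' measurableSet_Ioo).2
    (ae_of_all _ hpos)), ← integral_Ioc_eq_integral_Ioo, ← intervalIntegral.integral_of_le hab,
    intervalIntegral.integral_eq_sub_of_hasDerivAt_of_le hab hcont hderiv]
  exact (intervalIntegrable_iff_integrableOn_Ioo_of_le hab).2 hint

theorem lintegral_Ioo_mul_lintegral_Ioo_swap {a b : ℝ} {g K : ℝ → ℝ≥0∞} (hg : Measurable g)
    (hK : Measurable K) :
    ∫⁻ y in Ioo a b, K y * ∫⁻ t in Ioo a y, g t = ∫⁻ t in Ioo a b, g t * ∫⁻ y in Ioo t b, K y := by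
  set H : ℝ → ℝ → ℝ≥0∞ := fun y t => if t < y then K y * g t else 0
  have hy : ∀ y ∈ Ioo a b, K y * ∫⁻ t in Ioo a y, g t = ∫⁻ t in Ioo a b, H y t := by
    intro y hy
    have : ∀ t, H y t = (Iio y).indicator (fun t => K y * g t) t := fun t => by
      simp only [H, indicator_apply, mem_Iio]
    simp_rw [this]
    rw [lintegral_indicator measurableSet_Iio, Measure.restrict_restrict measurableSet_Iio,
      Iio_inter_Ioo, min_eq_left hy.2.le, lintegral_const_mul _ hg]
  have ht : ∀ t ∈ Ioo a b, g t * ∫⁻ y in Ioo t b, K y = ∫⁻ y in Ioo a b, H y t := by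
    intro t ht
    have : ∀ y, H y t = (Ioi t).indicator (fun y => g t * K y) y := fun y => by
      simp only [H, indicator_apply, mem_Ioi, mul_comm]
    simp_rw [this]
    rw [lintegral_indicator measurableSet_Ioi, Measure.restrict_restrict measurableSet_Ioi,
      Ioi_inter_Ioo, max_eq_left ht.1.le, lintegral_const_mul _ hK]
  rw [setLIntegral_congr_fun measurableSet_Ioo hy, setLIntegral_congr_fun measurableSet_Ioo ht]
  refine lintegral_lintegral_swap (Measurable.aemeasurable ?_)
  exact Measurable.ite (measurableSet_lt measurable_snd measurable_fst)
    ((hK.comp measurable_fst).mul (hg.comp measurable_snd)) measurable_const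

theorem setLIntegral_Ioo_comp_const_add (c : ℝ) {ℓ : ℝ} (F : ℝ → ℝ≥0∞) :
    ∫⁻ s in Ioo 0 ℓ, F (c + s) = ∫⁻ y in Ioo c (c + ℓ), F y := by
  rw [← (measurePreserving_add_left volume c).setLIntegral_comp_preimage_emb
    (measurableEmbedding_addLeft c) F (Ioo c (c + ℓ)), preimage_const_add_Ioo, sub_self,
    add_sub_cancel_left]

theorem setLIntegral_Ioo_comp_const_sub (c : ℝ) {ℓ : ℝ} (F : ℝ → ℝ≥0∞) :
    ∫⁻ s in Ioo 0 ℓ, F (c - s) = ∫⁻ y in Ioo (c - ℓ) c, F y := by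
  rw [← (Measure.measurePreserving_sub_left volume c).setLIntegral_comp_preimage_emb
    (measurableEmbedding_subLeft c) F (Ioo (c - ℓ) c), preimage_const_sub_Ioo, sub_self,
    sub_sub_cancel]

theorem setLIntegral_Ioo_eq_add {a b c : ℝ} (hac : a ≤ c) (hcb : c ≤ b) (F : ℝ → ℝ≥0∞) :
    ∫⁻ y in Ioo a b, F y = (∫⁻ y in Ioo a c, F y) + ∫⁻ y in Ioo c b, F y := by
  simp only [setLIntegral_congr Ioo_ae_eq_Ioc]
  rw [← Ioc_union_Ioc_eq_Ioc hac hcb,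
    lintegral_union measurableSet_Ioc (Ioc_disjoint_Ioc_of_le le_rfl)]

theorem integrable_and_integral_add_le_of_lintegral_le {α : Type*} [MeasurableSpace α]
    {μ : Measure α} {u v : α → ℝ} {κ A : ℝ} (hκ : 0 < κ) (hA : 0 ≤ A)
    (hu : AEStronglyMeasurable u μ) (hv : AEStronglyMeasurable v μ) (hu₀ : 0 ≤ᵐ[μ] u)
    (hv₀ : 0 ≤ᵐ[μ] v)
    (h : (∫⁻ x, ENNReal.ofReal (u x) ∂μ) + ENNReal.ofReal κ * ∫⁻ x, ENNReal.ofReal (v x) ∂μ ≤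
      ENNReal.ofReal A) :
    Integrable u μ ∧ Integrable v μ ∧ ∫ x, u x ∂μ + κ * ∫ x, v x ∂μ ≤ A := by
  have hU : ∫⁻ x, ENNReal.ofReal (u x) ∂μ < ∞ :=
    (le_self_add.trans h).trans_lt ENNReal.ofReal_lt_top
  have hκV : ENNReal.ofReal κ * ∫⁻ x, ENNReal.ofReal (v x) ∂μ < ∞ :=
    (le_add_self.trans h).trans_lt ENNReal.ofReal_lt_top
  have hV : ∫⁻ x, ENNReal.ofReal (v x) ∂μ < ∞ :=
    ENNReal.lt_top_of_mul_ne_top_right hκV.ne (ENNReal.ofReal_pos.2 hκ).ne'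
  refine ⟨⟨hu, (hasFiniteIntegral_iff_ofReal hu₀).2 hU⟩,
    ⟨hv, (hasFiniteIntegral_iff_ofReal hv₀).2 hV⟩, ?_⟩
  rw [integral_eq_lintegral_of_nonneg_ae hu₀ hu, integral_eq_lintegral_of_nonneg_ae hv₀ hv,
    ← ENNReal.toReal_ofReal hκ.le, ← ENNReal.toReal_mul, ← ENNReal.toReal_add hU.ne hκV.ne]
  exact ENNReal.toReal_le_of_le_ofReal hA h

theorem continuousOn_of_eq_add_intervalIntegral {φ f : ℝ → ℝ} {a b : ℝ} (hab : a ≤ b)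
    (hf : IntegrableOn f (Icc a b)) (hφ : ∀ x ∈ Icc a b, φ x = φ a + ∫ t in a..x, f t) :
    ContinuousOn φ (Icc a b) := by
  rw [← uIcc_of_le hab] at hf hφ ⊢
  exact (continuousOn_const.add (intervalIntegral.continuousOn_primitive_interval hf)).congr hφ

theorem exists_measurable_ae_eq_of_eq_add_intervalIntegral {φ f : ℝ → ℝ} {a b c : ℝ}
    (hf : IntegrableOn f (Icc a b)) (hφ : ∀ x ∈ Icc a b, φ x = φ a + ∫ t in a..x, f t)
    (hc : c ∈ Icc a b) :
    ∃ g, Measurable g ∧ f =ᵐ[volume.restrict (Icc a b)] g ∧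
      ∀ y ∈ Icc a b, φ y = φ c + ∫ t in c..y, g t := by
  have hf_meas := hf.aestronglyMeasurable.aemeasurable
  refine ⟨hf_meas.mk f, hf_meas.measurable_mk, hf_meas.ae_eq_mk, fun y hy => ?_⟩
  have ha : a ∈ Icc a b := left_mem_Icc.2 (hc.1.trans hc.2)
  have hint : ∀ u ∈ Icc a b, ∀ v ∈ Icc a b, IntervalIntegrable f volume u v := fun u hu v hv =>
    (hf.mono_set (uIcc_subset_Icc hu hv)).intervalIntegrable
  rw [← intervalIntegral.integral_congr_ae_restrict (ae_restrict_of_ae_restrict_of_subset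
      (uIoc_subset_uIcc.trans (uIcc_subset_Icc hc hy)) hf_meas.ae_eq_mk),
    hφ y hy, hφ c hc, add_assoc,
    intervalIntegral.integral_add_adjacent_intervals (hint a ha c hc) (hint c hc y hy)]

theorem lintegral_Ioo_inv_sqrt {y : ℝ} (hy : 0 ≤ y) :
    ∫⁻ t in Ioo 0 y, ENNReal.ofReal (√t)⁻¹ = ENNReal.ofReal (2 * √y) := by
  have hderiv : ∀ t ∈ Ioo 0 y, HasDerivAt (fun t => 2 * √t) (√t)⁻¹ t := fun t ht => by
    refine ((Real.hasDerivAt_sqrt ht.1.ne').const_mul 2).congr_deriv ?_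
    field_simp
  rw [lintegral_Ioo_eq_ofReal_sub_of_hasDerivAt hy (by fun_prop) hderiv
    (fun t _ => inv_nonneg.2 (Real.sqrt_nonneg t))]
  simp

theorem ofReal_sq_intervalIntegral_le {f : ℝ → ℝ} (hf : Measurable f) {y : ℝ} (hy : 0 ≤ y) :
    ENNReal.ofReal ((∫ t in 0..y, f t) ^ 2) ≤
      ENNReal.ofReal (2 * √y) * ∫⁻ t in Ioo 0 y, ENNReal.ofReal (√t * f t ^ 2) := by
  have hnorm : ‖∫ t in 0..y, f t‖ₑ ≤ ∫⁻ t in Ioo 0 y, ‖f t‖ₑ := by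
    rw [intervalIntegral.integral_of_le hy, integral_Ioc_eq_integral_Ioo]
    exact enorm_integral_le_lintegral_enorm _
  have hpos : ∀ᵐ t ∂volume.restrict (Ioo 0 y), 0 < t :=
    (ae_restrict_iff' measurableSet_Ioo).2 (ae_of_all _ fun t ht => ht.1)
  have hcs := sq_lintegral_le_lintegral_inv_mul_lintegral (μ := volume.restrict (Ioo 0 y))
    (f := fun t => ‖f t‖ₑ) (w := fun t => ENNReal.ofReal √t) (by fun_prop) (by fun_prop)
    (by filter_upwards [hpos] with t ht using by simpa using ht)
    (ae_of_all _ fun _ => ENNReal.ofReal_ne_top)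
  calc ENNReal.ofReal ((∫ t in 0..y, f t) ^ 2) = ‖∫ t in 0..y, f t‖ₑ ^ 2 := by
        rw [Real.enorm_eq_ofReal_abs, ← ENNReal.ofReal_pow (abs_nonneg _), sq_abs]
    _ ≤ (∫⁻ t in Ioo 0 y, ‖f t‖ₑ) ^ 2 := by gcongr
    _ ≤ _ := hcs
    _ = _ := by
        congr 1
        · rw [← lintegral_Ioo_inv_sqrt hy]
          refine setLIntegral_congr_fun measurableSet_Ioo fun t ht => ?_
          rw [ENNReal.ofReal_inv_of_pos (Real.sqrt_pos.2 ht.1)]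
        · refine lintegral_congr fun t => ?_
          rw [Real.enorm_eq_ofReal_abs, ← ENNReal.ofReal_pow (abs_nonneg _), sq_abs,
            ← ENNReal.ofReal_mul (Real.sqrt_nonneg t)]

noncomputable def hardyKernel (M y : ℝ) : ℝ := 2 * √y * (1 / y ^ 2 + 1 / (M * y))

theorem lintegral_Ioo_hardyKernel_le {t ℓ M : ℝ} (ht : 0 < t) (htℓ : t ≤ ℓ) (hℓM : ℓ ≤ M) :
    ∫⁻ y in Ioo t ℓ, ENNReal.ofReal (hardyKernel M y) ≤
      ENNReal.ofReal (4 / √t) := by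
  have hM : 0 < M := ht.trans_le (htℓ.trans hℓM)
  have hderiv : ∀ y ∈ Ioo t ℓ, HasDerivAt (fun y => 4 * √y / M - 4 / √y)
      (hardyKernel M y) y := fun y hy => by
    have hy : 0 < y := ht.trans hy.1
    have hs : 0 < √y := Real.sqrt_pos.2 hy
    have hsq : √y ^ 2 = y := Real.sq_sqrt hy.le
    have h := Real.hasDerivAt_sqrt hy.ne'
    refine (((h.const_mul 4).div_const M).sub
      ((hasDerivAt_const y (4 : ℝ)).div h hs.ne')).congr_deriv ?_
    rw [hardyKernel]
    field_simp
    rw [show √y ^ 4 = (√y ^ 2) ^ 2 by ring, hsq]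
    ring
  have hcont : ContinuousOn (fun y => 4 * √y / M - 4 / √y) (Icc t ℓ) := fun y hy =>
    have := (Real.sqrt_pos.2 (ht.trans_le hy.1)).ne'
    by fun_prop (disch := assumption)
  rw [lintegral_Ioo_eq_ofReal_sub_of_hasDerivAt htℓ hcont hderiv
    (fun y hy => by have := ht.trans hy.1; rw [hardyKernel]; positivity)]
  gcongr
  have hℓ : 0 < ℓ := ht.trans_le htℓ
  have key : 4 * √ℓ / M ≤ 4 / √ℓ := by
    rw [div_le_div_iff₀ hM (Real.sqrt_pos.2 hℓ), mul_assoc, Real.mul_self_sqrt hℓ.le]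
    linarith
  have : 0 ≤ 4 * √t / M := by positivity
  linarith

theorem hardy_Ioo_zero {f : ℝ → ℝ} (hf : Measurable f) {ℓ M : ℝ} (hℓ : 0 ≤ ℓ) (hℓM : ℓ ≤ M) :
    (∫⁻ y in Ioo 0 ℓ, ENNReal.ofReal ((∫ t in 0..y, f t) ^ 2 / y ^ 2)) +
        ENNReal.ofReal (1 / M) * ∫⁻ y in Ioo 0 ℓ, ENNReal.ofReal ((∫ t in 0..y, f t) ^ 2 / |y|) ≤
      4 * ∫⁻ t in Ioo 0 ℓ, ENNReal.ofReal (f t ^ 2) := by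
  rcases hℓ.eq_or_lt with rfl | hℓ
  · simp
  have hM : 0 < M := hℓ.trans_le hℓM
  set F : ℝ → ℝ := fun y => ∫ t in 0..y, f t
  set e : ℝ → ℝ≥0∞ := fun t => ENNReal.ofReal (√t * f t ^ 2)
  have hpointwise : ∀ y ∈ Ioo 0 ℓ, ENNReal.ofReal (F y ^ 2 / y ^ 2) +
      ENNReal.ofReal (1 / M) * ENNReal.ofReal (F y ^ 2 / |y|) ≤
        ENNReal.ofReal (hardyKernel M y) * ∫⁻ t in Ioo 0 y, e t := fun y hy => by
    have hy : 0 < y := hy.1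
    calc ENNReal.ofReal (F y ^ 2 / y ^ 2) + ENNReal.ofReal (1 / M) * ENNReal.ofReal (F y ^ 2 / |y|)
        = ENNReal.ofReal (F y ^ 2) * ENNReal.ofReal (1 / y ^ 2 + 1 / (M * y)) := by
          rw [← ENNReal.ofReal_mul (by positivity), ← ENNReal.ofReal_mul (by positivity),
            ← ENNReal.ofReal_add (by positivity) (by positivity), abs_of_pos hy]
          congr 1
          field_simp
      _ ≤ ENNReal.ofReal (2 * √y) * (∫⁻ t in Ioo 0 y, e t) *
            ENNReal.ofReal (1 / y ^ 2 + 1 / (M * y)) := by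
          gcongr
          exact ofReal_sq_intervalIntegral_le hf hy.le
      _ = ENNReal.ofReal (hardyKernel M y) * ∫⁻ t in Ioo 0 y, e t := by
          rw [hardyKernel, mul_right_comm, ← ENNReal.ofReal_mul (by positivity)]
  calc (∫⁻ y in Ioo 0 ℓ, ENNReal.ofReal (F y ^ 2 / y ^ 2)) +
        ENNReal.ofReal (1 / M) * ∫⁻ y in Ioo 0 ℓ, ENNReal.ofReal (F y ^ 2 / |y|)
      ≤ ∫⁻ y in Ioo 0 ℓ, (ENNReal.ofReal (F y ^ 2 / y ^ 2) +
          ENNReal.ofReal (1 / M) * ENNReal.ofReal (F y ^ 2 / |y|)) := by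
        rw [← lintegral_const_mul' _ _ ENNReal.ofReal_ne_top]
        exact le_lintegral_add _ _
    _ ≤ ∫⁻ y in Ioo 0 ℓ, ENNReal.ofReal (hardyKernel M y) * ∫⁻ t in Ioo 0 y, e t :=
        setLIntegral_mono' measurableSet_Ioo hpointwise
    _ = ∫⁻ t in Ioo 0 ℓ, e t * ∫⁻ y in Ioo t ℓ, ENNReal.ofReal (hardyKernel M y) :=
        lintegral_Ioo_mul_lintegral_Ioo_swap (by fun_prop) (by unfold hardyKernel; fun_prop)
    _ ≤ ∫⁻ t in Ioo 0 ℓ, e t * ENNReal.ofReal (4 / √t) :=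
        setLIntegral_mono' measurableSet_Ioo fun t ht => by
          gcongr
          exact lintegral_Ioo_hardyKernel_le ht.1 ht.2.le hℓM
    _ = ∫⁻ t in Ioo 0 ℓ, 4 * ENNReal.ofReal (f t ^ 2) := by
        refine setLIntegral_congr_fun measurableSet_Ioo fun t ht => ?_
        have := Real.sqrt_pos.2 ht.1
        rw [← ENNReal.ofReal_mul (by positivity), ← ENNReal.ofReal_ofNat,
          ← ENNReal.ofReal_mul zero_le_four]
        congr 1
        field_simp
    _ = 4 * ∫⁻ t in Ioo 0 ℓ, ENNReal.ofReal (f t ^ 2) := lintegral_const_mul' _ _ (by simp)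

theorem hardy_Ioo_right {g : ℝ → ℝ} (hg : Measurable g) (c : ℝ) {ℓ M : ℝ} (hℓ : 0 ≤ ℓ)
    (hℓM : ℓ ≤ M) :
    (∫⁻ y in Ioo c (c + ℓ), ENNReal.ofReal ((∫ t in c..y, g t) ^ 2 / (y - c) ^ 2)) +
        ENNReal.ofReal (1 / M) *
          ∫⁻ y in Ioo c (c + ℓ), ENNReal.ofReal ((∫ t in c..y, g t) ^ 2 / |y - c|) ≤
      4 * ∫⁻ t in Ioo c (c + ℓ), ENNReal.ofReal (g t ^ 2) := by
  have hshift : ∀ s, ∫ t in c..c + s, g t = ∫ u in 0..s, g (c + u) := fun s => by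
    rw [intervalIntegral.integral_comp_add_left, add_zero]
  simp only [← setLIntegral_Ioo_comp_const_add c, hshift, add_sub_cancel_left]
  exact hardy_Ioo_zero (hg.comp (measurable_const_add c)) hℓ hℓM

theorem hardy_Ioo_left {g : ℝ → ℝ} (hg : Measurable g) (c : ℝ) {ℓ M : ℝ} (hℓ : 0 ≤ ℓ)
    (hℓM : ℓ ≤ M) :
    (∫⁻ y in Ioo (c - ℓ) c, ENNReal.ofReal ((∫ t in c..y, g t) ^ 2 / (y - c) ^ 2)) +
        ENNReal.ofReal (1 / M) *
          ∫⁻ y in Ioo (c - ℓ) c, ENNReal.ofReal ((∫ t in c..y, g t) ^ 2 / |y - c|) ≤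
      4 * ∫⁻ t in Ioo (c - ℓ) c, ENNReal.ofReal (g t ^ 2) := by
  have hreflect : ∀ s, (∫ t in c..c - s, g t) ^ 2 = (∫ u in 0..s, g (c - u)) ^ 2 := fun s => by
    rw [intervalIntegral.integral_comp_sub_left, sub_zero, intervalIntegral.integral_symm, neg_sq]
  simp only [← setLIntegral_Ioo_comp_const_sub c, hreflect, sub_sub_cancel_left, neg_sq, abs_neg]
  exact hardy_Ioo_zero (hg.comp (measurable_const_sub c)) hℓ hℓM

theorem hardy_Ioo {φ g : ℝ → ℝ} (hg : Measurable g) {a b c : ℝ} (hc : c ∈ Icc a b)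
    (hφ : ∀ y ∈ Ioo a b, φ y = ∫ t in c..y, g t) :
    (∫⁻ y in Ioo a b, ENNReal.ofReal (φ y ^ 2 / (y - c) ^ 2)) +
        ENNReal.ofReal (1 / max (b - c) (c - a)) *
          ∫⁻ y in Ioo a b, ENNReal.ofReal (φ y ^ 2 / |y - c|) ≤
      4 * ∫⁻ t in Ioo a b, ENNReal.ofReal (g t ^ 2) := by
  have hcongr : ∀ w : ℝ → ℝ, ∫⁻ y in Ioo a b, ENNReal.ofReal (φ y ^ 2 / w y) =
      ∫⁻ y in Ioo a b, ENNReal.ofReal ((∫ t in c..y, g t) ^ 2 / w y) := fun w =>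
    setLIntegral_congr_fun measurableSet_Ioo fun y hy => by rw [hφ y hy]
  have hleft := hardy_Ioo_left hg c (sub_nonneg.2 hc.1) (le_max_right (b - c) _)
  have hright := hardy_Ioo_right hg c (sub_nonneg.2 hc.2) (le_max_left _ (c - a))
  rw [sub_sub_cancel] at hleft
  rw [add_sub_cancel] at hright
  rw [hcongr (fun y => (y - c) ^ 2), hcongr (fun y => |y - c|)]
  simp only [setLIntegral_Ioo_eq_add hc.1 hc.2]
  rw [mul_add, mul_add, add_add_add_comm]
  exact add_le_add hleft hright

/-- **Hardy type inequality** (Lemma 3.1).  If `φ ∈ H¹(a,b)` (i.e. `φ` is the primitive of an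
`L²` function `φ'`) vanishes at some `y₀ ∈ [a,b]`, then
`‖φ/(y−y₀)‖²_{L²} + (max(b−y₀,y₀−a))⁻¹ ∫ φ²/|y−y₀| ≤ 4‖φ'‖²_{L²}`;
in particular both integrals on the left-hand side are finite. -/
theorem hardy_type_inequality
    (a b y₀ : ℝ) (hab : a < b) (hy₀ : y₀ ∈ Set.Icc a b)
    (φ φ' : ℝ → ℝ)
    (hφ'L2 : MeasureTheory.MemLp φ' 2 (volume.restrict (Set.Ioo a b)))
    (hφ : ∀ x ∈ Set.Icc a b, φ x = φ a + ∫ t in a..x, φ' t)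
    (hzero : φ y₀ = 0) :
    IntegrableOn (fun y => (φ y) ^ 2 / (y - y₀) ^ 2) (Set.Ioo a b) ∧
    IntegrableOn (fun y => (φ y) ^ 2 / |y - y₀|) (Set.Ioo a b) ∧
    (∫ y in Set.Ioo a b, (φ y) ^ 2 / (y - y₀) ^ 2) +
        (1 / max (b - y₀) (y₀ - a)) * (∫ y in Set.Ioo a b, (φ y) ^ 2 / |y - y₀|)
      ≤ 4 * ∫ y in Set.Ioo a b, (φ' y) ^ 2 := by
  have hφ'_int : IntegrableOn φ' (Icc a b) := by
    rw [integrableOn_Icc_iff_integrableOn_Ioo]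
    exact hφ'L2.integrable one_le_two
  -- Tonelli needs a measurable representative of `φ'`, not just an a.e. measurable one.
  obtain ⟨g, hg, hφ'g, hprim⟩ :=
    exists_measurable_ae_eq_of_eq_add_intervalIntegral hφ'_int hφ hy₀
  have hφ_meas : AEMeasurable φ (volume.restrict (Ioo a b)) :=
    ((continuousOn_of_eq_add_intervalIntegral hab.le hφ'_int hφ).mono
      Ioo_subset_Icc_self).aemeasurable measurableSet_Ioo
  have henergy : ENNReal.ofReal (4 * ∫ y in Ioo a b, φ' y ^ 2) =
      4 * ∫⁻ t in Ioo a b, ENNReal.ofReal (g t ^ 2) := by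
    rw [ENNReal.ofReal_mul zero_le_four, ENNReal.ofReal_ofNat,
      ofReal_integral_eq_lintegral_ofReal hφ'L2.integrable_sq (ae_of_all _ fun _ => sq_nonneg _)]
    congr 1
    refine lintegral_congr_ae ?_
    filter_upwards [ae_restrict_of_ae_restrict_of_subset Ioo_subset_Icc_self hφ'g] with t ht
    rw [ht]
  have hM : 0 < 1 / max (b - y₀) (y₀ - a) :=
    one_div_pos.2 (lt_max_iff.2 (by by_contra! h; linarith [h.1, h.2]))
  refine integrable_and_integral_add_le_of_lintegral_le hM
    (mul_nonneg zero_le_four (integral_nonneg fun _ => sq_nonneg _))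
    (by fun_prop : AEMeasurable (fun y => φ y ^ 2 / (y - y₀) ^ 2) _).aestronglyMeasurable
    (by fun_prop : AEMeasurable (fun y => φ y ^ 2 / |y - y₀|) _).aestronglyMeasurable
    (ae_of_all _ fun _ => by positivity) (ae_of_all _ fun _ => by positivity) ?_
  rw [henergy]
  exact hardy_Ioo hg hy₀ fun y hy => by rw [hprim y (Ioo_subset_Icc_self hy), hzero, zero_add]
end

section
/- Let y₁ < y₂, let u : [y₁,y₂] → ℝ be twice continuously differentiable with u(y₁) = u_min := min_{[y₁,y₂]} u and u'(y₁) ≠ 0, and fix γ ∈ (0, 1/2]. Then there exist constants C > 0 and δ ∈ (0, y₂−y₁) such that for every δ₁ ∈ (0,δ], setting z = y₁+δ₁, for every real c with 0 < u_min − c < 1 and every twice continuously differentiable φ : [y₁,z] → ℝ with F := φ'', writing |f|_{L∞(z)} := sup_{y∈[y₁,z]} |f(y)|, the following four inequalities hold: (1) |φ|_{L∞(z)} ≤ C(δ₁^γ |(u−c)^{2−γ}F|_{L∞(z)} + |φ(z)| + δ₁^γ |φ'(z)|); (2) |(u−c)^{1−γ}φ|_{L∞(z)} + δ₁^γ |(u−c)^{2−2γ}φ'|_{L∞(z)}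 ≤ C(δ₁^γ |(u−c)^{3−2γ}F|_{L∞(z)} + |φ(z)| + δ₁^γ |φ'(z)|); (3) |(u−c)^{γ−1}φ|_{L∞(z)} ≤ C(|(u−c)^{γ+1}F|_{L∞(z)} + (u_min−c)^{γ−1}|φ(y₁)| + |φ(z)| + |φ'(z)|); (4) |(u−c)^{−1}φ|_{L∞(z)} ≤ C(δ₁^γ |(u−c)^{1−γ}F|_{L∞(z)} + (u_min−c)^{−1}|φ(y₁)| + |φ'(z)|). -/
/-!
Put `w = u - c`. A minimum of `u` at the left endpoint with `u'(y₁) ≠ 0` forces `u'(y₁) > 0`,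
so on some `[y₁, y₁ + δ]` the slope of `w` lies in `[k, 3k]` with `k = u'(y₁) / 2`, and
`w ≥ u_min - c > 0`. Comparing `w ^ ν` with `w ^ ν * w' / k` turns every integral of a power of
`w` into an explicit primitive. Each estimate is then two integrations: integrating `F = φ''`
from `z` bounds `|φ'|` by `|φ'(z)|` plus a power of `w` times the weighted norm of `F`, and `φ'`
is integrated from `z` for (1), (2) and from `y₁` for (3), (4). The factor `δ₁ ^ γ` comes from
`∫ w ^ (γ - 1) ≲ δ₁ ^ γ`.
-/

open Set

noncomputable section

/-- `|f|_{L∞(z)} = sup_{y ∈ [y₁,z]} |f(y)|`. -/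
def supAbs (y₁ z : ℝ) (f : ℝ → ℝ) : ℝ := sSup ((fun y => |f y|) '' Set.Icc y₁ z)

open Filter Topology MeasureTheory

lemma supAbs_le {a b B : ℝ} {f : ℝ → ℝ} (hab : a ≤ b) (h : ∀ y ∈ Icc a b, |f y| ≤ B) :
    supAbs a b f ≤ B :=
  csSup_le ((nonempty_Icc.2 hab).image _) (by rintro _ ⟨y, hy, rfl⟩; exact h y hy)

lemma le_supAbs {a b y : ℝ} {f : ℝ → ℝ} (hf : ContinuousOn f (Icc a b)) (hy : y ∈ Icc a b) :
    |f y| ≤ supAbs a b f :=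
  le_csSup (isCompact_Icc.bddAbove_image hf.abs) ⟨y, hy, rfl⟩

lemma supAbs_nonneg (a b : ℝ) (f : ℝ → ℝ) : 0 ≤ supAbs a b f :=
  Real.sSup_nonneg (by rintro _ ⟨y, -, rfl⟩; exact abs_nonneg _)

lemma abs_le_supAbs_mul_rpow_neg {a b e t : ℝ} {w F : ℝ → ℝ} (hw : ContinuousOn w (Icc a b))
    (hpos : ∀ y ∈ Icc a b, 0 < w y) (hF : ContinuousOn F (Icc a b)) (ht : t ∈ Icc a b) :
    |F t| ≤ supAbs a b (fun y => w y ^ e * F y) * w t ^ (-e) := by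
  have hwe : ContinuousOn (fun y => w y ^ e) (Icc a b) :=
    hw.rpow_const fun y hy => Or.inl (hpos y hy).ne'
  have h := le_supAbs (f := fun y => w y ^ e * F y) (hwe.mul hF) ht
  rw [abs_mul, abs_of_pos (Real.rpow_pos_of_pos (hpos t ht) e)] at h
  calc |F t| = w t ^ e * |F t| * w t ^ (-e) := by
        rw [mul_comm, ← mul_assoc, ← Real.rpow_add (hpos t ht), neg_add_cancel,
          Real.rpow_zero, one_mul]
    _ ≤ _ := mul_le_mul_of_nonneg_right h (Real.rpow_pos_of_pos (hpos t ht) _).le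

lemma abs_sub_le_integral_of_abs_deriv_le {f f' G : ℝ → ℝ} {a b : ℝ} (hab : a ≤ b)
    (hf : ∀ x ∈ Icc a b, HasDerivWithinAt f (f' x) (Icc a b) x)
    (hG : IntegrableOn G (Icc a b)) (hle : ∀ x ∈ Icc a b, |f' x| ≤ G x) :
    |f b - f a| ≤ ∫ x in a..b, G x := by
  have hcont : ContinuousOn f (Icc a b) := fun x hx => (hf x hx).continuousWithinAt
  have hderiv : ∀ x ∈ Ioo a b, HasDerivWithinAt f (f' x) (Ioi x) x := fun x hx =>
    ((hf x (Ioo_subset_Icc_self hx)).hasDerivAt (Icc_mem_nhds hx.1 hx.2)).hasDerivWithinAt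
  have hupper := intervalIntegral.sub_le_integral_of_hasDeriv_right_of_le hab hcont hderiv hG
    fun x hx => (le_abs_self _).trans (hle x (Ioo_subset_Icc_self hx))
  have hlower := intervalIntegral.integral_le_sub_of_hasDeriv_right_of_le (φ := fun x => -G x)
    hab hcont hderiv hG.neg fun x hx =>
      neg_le.1 ((neg_le_abs _).trans (hle x (Ioo_subset_Icc_self hx)))
  rw [intervalIntegral.integral_neg] at hlower
  exact abs_le.2 ⟨by linarith, hupper⟩

lemma abs_le_abs_right_add_integral {f f' G : ℝ → ℝ} {a b y : ℝ}
    (hf : ∀ x ∈ Icc a b, HasDerivWithinAt f (f' x) (Icc a b) x)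
    (hG : ContinuousOn G (Icc a b)) (hle : ∀ x ∈ Icc a b, |f' x| ≤ G x) (hy : y ∈ Icc a b) :
    |f y| ≤ |f b| + ∫ t in y..b, G t := by
  have hsub : Icc y b ⊆ Icc a b := Icc_subset_Icc_left hy.1
  have h := abs_sub_le_integral_of_abs_deriv_le hy.2 (fun x hx => (hf x (hsub hx)).mono hsub)
    ((hG.mono hsub).integrableOn_Icc) fun x hx => hle x (hsub hx)
  linarith [abs_sub_abs_le_abs_sub (f y) (f b), abs_sub_comm (f y) (f b)]

lemma abs_le_abs_left_add_integral {f f' G : ℝ → ℝ} {a b y : ℝ}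
    (hf : ∀ x ∈ Icc a b, HasDerivWithinAt f (f' x) (Icc a b) x)
    (hG : ContinuousOn G (Icc a b)) (hle : ∀ x ∈ Icc a b, |f' x| ≤ G x) (hy : y ∈ Icc a b) :
    |f y| ≤ |f a| + ∫ t in a..y, G t := by
  have hsub : Icc a y ⊆ Icc a b := Icc_subset_Icc_right hy.2
  have h := abs_sub_le_integral_of_abs_deriv_le hy.1 (fun x hx => (hf x (hsub hx)).mono hsub)
    ((hG.mono hsub).integrableOn_Icc) fun x hx => hle x (hsub hx)
  linarith [abs_sub_abs_le_abs_sub (f y) (f a)]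

lemma le_rpow_one_sub_mul_rpow {s δ₁ δ γ : ℝ} (hs0 : 0 ≤ s) (hs : s ≤ δ₁) (hδ : δ₁ ≤ δ)
    (hγ0 : 0 ≤ γ) (hγ1 : γ ≤ 1) : s ≤ δ ^ (1 - γ) * δ₁ ^ γ := by
  have hδ₁ : 0 ≤ δ₁ := hs0.trans hs
  calc s ≤ δ₁ ^ (1 - γ) * δ₁ ^ γ := by
        rwa [← Real.rpow_add_of_nonneg hδ₁ (by linarith) hγ0, sub_add_cancel, Real.rpow_one]
    _ ≤ δ ^ (1 - γ) * δ₁ ^ γ := by gcongr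

lemma mul_add_mul_add_mul_le {a b c C X Y Z : ℝ} (ha : 0 ≤ a) (hb : 0 ≤ b) (hc : 0 ≤ c)
    (hX : 0 ≤ X) (hY : 0 ≤ Y) (hZ : 0 ≤ Z) (hC : a + b + c ≤ C) :
    a * X + b * Y + c * Z ≤ C * (X + Y + Z) := by
  nlinarith [mul_nonneg ha hY, mul_nonneg ha hZ, mul_nonneg hb hX, mul_nonneg hb hZ,
    mul_nonneg hc hX, mul_nonneg hc hY,
    mul_nonneg (sub_nonneg.2 hC) (add_nonneg (add_nonneg hX hY) hZ)]

lemma HasDerivWithinAt.nonneg_of_isMinOn_Icc {f : ℝ → ℝ} {f' a b : ℝ} (hab : a < b)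
    (hf : HasDerivWithinAt f f' (Icc a b) a) (hmin : IsMinOn f (Icc a b) a) : 0 ≤ f' := by
  have hcone : b - a ∈ posTangentConeAt (Icc a b) a :=
    mem_posTangentConeAt_of_segment_subset (by rw [add_sub_cancel, segment_eq_Icc hab.le])
  have h := hmin.localize.hasFDerivWithinAt_nonneg hf.hasFDerivWithinAt hcone
  simp only [ContinuousLinearMap.toSpanSingleton_apply, smul_eq_mul] at h
  exact nonneg_of_mul_nonneg_right h (sub_pos.2 hab)

lemma ContinuousWithinAt.exists_forall_Icc_mem {g : ℝ → ℝ} {a b : ℝ} {U : Set ℝ} (hab : a < b)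
    (hg : ContinuousWithinAt g (Icc a b) a) (hU : U ∈ 𝓝 (g a)) :
    ∃ δ ∈ Ioo 0 (b - a), ∀ y ∈ Icc a (a + δ), g y ∈ U := by
  have h : g ⁻¹' U ∈ 𝓝[≥] a := nhdsWithin_Icc_eq_nhdsGE hab ▸ hg hU
  obtain ⟨v, hav, hv⟩ := mem_nhdsGE_iff_exists_Icc_subset.1 h
  refine ⟨min (v - a) ((b - a) / 2), ⟨by simp [hav, hab], ?_⟩, fun y hy => hv ⟨hy.1, ?_⟩⟩
  · linarith [min_le_right (v - a) ((b - a) / 2)]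
  · linarith [hy.2, min_le_left (v - a) ((b - a) / 2)]

structure EndpointWeight (w w' : ℝ → ℝ) (a b k K : ℝ) : Prop where
  hasDerivWithinAt : ∀ y ∈ Icc a b, HasDerivWithinAt w (w' y) (Icc a b) y
  le_deriv : ∀ y ∈ Icc a b, k ≤ w' y
  deriv_le : ∀ y ∈ Icc a b, w' y ≤ K
  left_le_right : a ≤ b
  slope_pos : 0 < k
  left_pos : 0 < w a

namespace EndpointWeight

variable {w w' : ℝ → ℝ} {a b k K x y : ℝ}

lemma left_mem (hw : EndpointWeight w w' a b k K) : a ∈ Icc a b := left_mem_Icc.2 hw.left_le_right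

lemma right_mem (hw : EndpointWeight w w' a b k K) : b ∈ Icc a b := right_mem_Icc.2 hw.left_le_right

lemma continuousOn (hw : EndpointWeight w w' a b k K) : ContinuousOn w (Icc a b) :=
  fun t ht => (hw.hasDerivWithinAt t ht).continuousWithinAt

lemma hasDerivAt (hw : EndpointWeight w w' a b k K) (hx : x ∈ Ioo a b) :
    HasDerivAt w (w' x) x :=
  (hw.hasDerivWithinAt x (Ioo_subset_Icc_self hx)).hasDerivAt (Icc_mem_nhds hx.1 hx.2)

lemma mul_sub_le_sub (hw : EndpointWeight w w' a b k K) (hx : x ∈ Icc a b) (hy : y ∈ Icc a b)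
    (hxy : x ≤ y) : k * (y - x) ≤ w y - w x := by
  have hsub : Icc x y ⊆ Icc a b := Icc_subset_Icc hx.1 hy.2
  simpa [mul_comm] using intervalIntegral.integral_le_sub_of_hasDeriv_right_of_le hxy
    (hw.continuousOn.mono hsub)
    (fun t ht => (hw.hasDerivAt ⟨hx.1.trans_lt ht.1, ht.2.trans_le hy.2⟩).hasDerivWithinAt)
    (integrableOn_const (by simp)) (fun t ht => hw.le_deriv t (hsub (Ioo_subset_Icc_self ht)))

lemma sub_le_mul_sub (hw : EndpointWeight w w' a b k K) (hx : x ∈ Icc a b) (hy : y ∈ Icc a b)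
    (hxy : x ≤ y) : w y - w x ≤ K * (y - x) := by
  have hsub : Icc x y ⊆ Icc a b := Icc_subset_Icc hx.1 hy.2
  simpa [mul_comm] using intervalIntegral.sub_le_integral_of_hasDeriv_right_of_le hxy
    (hw.continuousOn.mono hsub)
    (fun t ht => (hw.hasDerivAt ⟨hx.1.trans_lt ht.1, ht.2.trans_le hy.2⟩).hasDerivWithinAt)
    (integrableOn_const (by simp)) (fun t ht => hw.deriv_le t (hsub (Ioo_subset_Icc_self ht)))

lemma pos (hw : EndpointWeight w w' a b k K) (hy : y ∈ Icc a b) : 0 < w y := by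
  have := hw.mul_sub_le_sub hw.left_mem hy hy.1
  nlinarith [hw.slope_pos, hw.left_pos, hy.1]

lemma mul_sub_left_le (hw : EndpointWeight w w' a b k K) (hy : y ∈ Icc a b) :
    k * (y - a) ≤ w y := by
  linarith [hw.mul_sub_le_sub hw.left_mem hy hy.1, hw.left_pos]

lemma upper_pos (hw : EndpointWeight w w' a b k K) : 0 < K :=
  hw.slope_pos.trans_le ((hw.le_deriv a hw.left_mem).trans (hw.deriv_le a hw.left_mem))

lemma le_left_add_mul (hw : EndpointWeight w w' a b k K) (hy : y ∈ Icc a b) :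
    w y ≤ w a + K * (b - a) := by
  have := hw.sub_le_mul_sub hw.left_mem hy hy.1
  have : K * (y - a) ≤ K * (b - a) := by have := hw.upper_pos; gcongr; exact hy.2
  linarith

lemma monotoneOn (hw : EndpointWeight w w' a b k K) : MonotoneOn w (Icc a b) :=
  fun _ hx _ hy hxy => by nlinarith [hw.mul_sub_le_sub hx hy hxy, hw.slope_pos]

lemma continuousOn_rpow (hw : EndpointWeight w w' a b k K) (ν : ℝ) :
    ContinuousOn (fun t => w t ^ ν) (Icc a b) :=
  hw.continuousOn.rpow_const fun _ ht => Or.inl (hw.pos ht).ne'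

/-- Since `w' / k ≥ 1`, `w ^ ν` is dominated by the derivative of `w ^ (ν + 1) / (k (ν + 1))`. -/
lemma integral_rpow_le (hw : EndpointWeight w w' a b k K) {ν : ℝ} (hν : ν + 1 ≠ 0)
    (hx : x ∈ Icc a b) (hy : y ∈ Icc a b) (hxy : x ≤ y) :
    ∫ t in x..y, w t ^ ν ≤ (w y ^ (ν + 1) - w x ^ (ν + 1)) / (k * (ν + 1)) := by
  have hsub : Icc x y ⊆ Icc a b := Icc_subset_Icc hx.1 hy.2
  have hk := hw.slope_pos
  rw [sub_div]
  refine intervalIntegral.integral_le_sub_of_hasDeriv_right_of_le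
    (g := fun t => w t ^ (ν + 1) / (k * (ν + 1)))
    (g' := fun t => w' t * (ν + 1) * w t ^ (ν + 1 - 1) / (k * (ν + 1))) hxy
    (((hw.continuousOn_rpow _).mono hsub).div_const _) (fun t ht => ?_)
    ((hw.continuousOn_rpow ν).mono hsub).integrableOn_Icc (fun t ht => ?_)
  · have htI : t ∈ Ioo a b := ⟨hx.1.trans_lt ht.1, ht.2.trans_le hy.2⟩
    have hwt := hw.pos (Ioo_subset_Icc_self htI)
    exact (((hw.hasDerivAt htI).rpow_const (Or.inl hwt.ne')).div_const _).hasDerivWithinAt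
  · have htI := hsub (Ioo_subset_Icc_self ht)
    have hwt := Real.rpow_pos_of_pos (hw.pos htI) ν
    have hk' := hw.le_deriv t htI
    rw [add_sub_cancel_right, mul_right_comm, mul_div_mul_right _ _ hν, le_div_iff₀ hk]
    nlinarith

lemma integral_rpow_le_of_lt_neg_one (hw : EndpointWeight w w' a b k K) {ν : ℝ} (hν : ν < -1)
    (hx : x ∈ Icc a b) (hy : y ∈ Icc a b) (hxy : x ≤ y) :
    ∫ t in x..y, w t ^ ν ≤ w x ^ (ν + 1) / (k * (-1 - ν)) := by
  have hk : 0 < k * (-1 - ν) := mul_pos hw.slope_pos (by linarith)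
  calc ∫ t in x..y, w t ^ ν ≤ (w y ^ (ν + 1) - w x ^ (ν + 1)) / (k * (ν + 1)) :=
        hw.integral_rpow_le (by linarith) hx hy hxy
    _ = (w x ^ (ν + 1) - w y ^ (ν + 1)) / (k * (-1 - ν)) := by
        rw [← neg_div_neg_eq]; ring_nf
    _ ≤ w x ^ (ν + 1) / (k * (-1 - ν)) := by
        gcongr; exact sub_le_self _ (Real.rpow_pos_of_pos (hw.pos hy) _).le

lemma integral_rpow_le_of_neg_one_lt (hw : EndpointWeight w w' a b k K) {ν : ℝ} (hν : -1 < ν)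
    (hx : x ∈ Icc a b) (hy : y ∈ Icc a b) (hxy : x ≤ y) :
    ∫ t in x..y, w t ^ ν ≤ w y ^ (ν + 1) / (k * (ν + 1)) := by
  have hk : 0 < k * (ν + 1) := mul_pos hw.slope_pos (by linarith)
  calc ∫ t in x..y, w t ^ ν ≤ (w y ^ (ν + 1) - w x ^ (ν + 1)) / (k * (ν + 1)) :=
        hw.integral_rpow_le (by linarith) hx hy hxy
    _ ≤ w y ^ (ν + 1) / (k * (ν + 1)) := by
        gcongr; exact sub_le_self _ (Real.rpow_pos_of_pos (hw.pos hx) _).le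

/-- Uses the subadditivity of `s ↦ s ^ γ` for `γ ≤ 1`. -/
lemma integral_rpow_sub_one_le (hw : EndpointWeight w w' a b k K) {γ δ₁ : ℝ} (hγ0 : 0 < γ)
    (hγ1 : γ ≤ 1) (hx : x ∈ Icc a b) (hy : y ∈ Icc a b) (hxy : x ≤ y) (hδ₁ : y - x ≤ δ₁) :
    ∫ t in x..y, w t ^ (γ - 1) ≤ K ^ γ / (k * γ) * δ₁ ^ γ := by
  have hk : 0 < k * γ := mul_pos hw.slope_pos hγ0
  have hincr : 0 ≤ w y - w x := sub_nonneg.2 (hw.monotoneOn hx hy hxy)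
  have hK := hw.upper_pos.le
  calc ∫ t in x..y, w t ^ (γ - 1) ≤ (w y ^ γ - w x ^ γ) / (k * γ) := by
        simpa using hw.integral_rpow_le (ν := γ - 1) (by simpa using hγ0.ne') hx hy hxy
    _ ≤ (w y - w x) ^ γ / (k * γ) := by
        gcongr
        have := Real.rpow_add_le_add_rpow (hw.pos hx).le hincr hγ0.le hγ1
        rw [add_sub_cancel] at this
        linarith
    _ ≤ (K * (y - x)) ^ γ / (k * γ) := by
        gcongr; exact hw.sub_le_mul_sub hx hy hxy
    _ ≤ (K * δ₁) ^ γ / (k * γ) := by gcongr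
    _ = K ^ γ / (k * γ) * δ₁ ^ γ := by
        rw [Real.mul_rpow hK ((sub_nonneg.2 hxy).trans hδ₁)]; ring

lemma integral_rpow_add_le_rpow_mul (hw : EndpointWeight w w' a b k K) {μ ν : ℝ} (hμ : μ ≤ 0)
    (hx : x ∈ Icc a b) (hy : y ∈ Icc a b) (hxy : x ≤ y) :
    ∫ t in x..y, w t ^ (μ + ν) ≤ w x ^ μ * ∫ t in x..y, w t ^ ν := by
  have hsub : Icc x y ⊆ Icc a b := Icc_subset_Icc hx.1 hy.2
  rw [← intervalIntegral.integral_const_mul]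
  refine intervalIntegral.integral_mono_on hxy
    (((hw.continuousOn_rpow _).mono hsub).intervalIntegrable_of_Icc hxy)
    ((continuousOn_const.mul ((hw.continuousOn_rpow ν).mono hsub)).intervalIntegrable_of_Icc hxy)
    fun t ht => ?_
  rw [Real.rpow_add (hw.pos (hsub ht))]
  gcongr ?_ * _
  · exact (Real.rpow_pos_of_pos (hw.pos (hsub ht)) _).le
  · exact Real.rpow_le_rpow_of_nonpos (hw.pos hx) (hw.monotoneOn hx (hsub ht) ht.1) hμ

variable {f f' F : ℝ → ℝ} {A B e ν : ℝ}

lemma integral_const_add_mul_rpow (hw : EndpointWeight w w' a b k K)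
    (hx : x ∈ Icc a b) (hy : y ∈ Icc a b) (hxy : x ≤ y) :
    ∫ t in x..y, (A + B * w t ^ ν) = (y - x) * A + B * ∫ t in x..y, w t ^ ν := by
  have hint : IntervalIntegrable (fun t => w t ^ ν) volume x y :=
    ((hw.continuousOn_rpow ν).mono (Icc_subset_Icc hx.1 hy.2)).intervalIntegrable_of_Icc hxy
  rw [intervalIntegral.integral_add (intervalIntegrable_const (μ := volume)) (hint.const_mul B),
    intervalIntegral.integral_const, smul_eq_mul, intervalIntegral.integral_const_mul]

lemma abs_le_abs_right_add (hw : EndpointWeight w w' a b k K)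
    (hf : ∀ x ∈ Icc a b, HasDerivWithinAt f (f' x) (Icc a b) x)
    (hle : ∀ x ∈ Icc a b, |f' x| ≤ A + B * w x ^ ν) (hy : y ∈ Icc a b) :
    |f y| ≤ |f b| + (b - y) * A + B * ∫ t in y..b, w t ^ ν := by
  have h := abs_le_abs_right_add_integral (G := fun t => A + B * w t ^ ν) hf
    (continuousOn_const.add (continuousOn_const.mul (hw.continuousOn_rpow ν))) hle hy
  rwa [hw.integral_const_add_mul_rpow hy hw.right_mem hy.2, ← add_assoc] at h

lemma abs_le_abs_left_add (hw : EndpointWeight w w' a b k K)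
    (hf : ∀ x ∈ Icc a b, HasDerivWithinAt f (f' x) (Icc a b) x)
    (hle : ∀ x ∈ Icc a b, |f' x| ≤ A + B * w x ^ ν) (hy : y ∈ Icc a b) :
    |f y| ≤ |f a| + (y - a) * A + B * ∫ t in a..y, w t ^ ν := by
  have h := abs_le_abs_left_add_integral (G := fun t => A + B * w t ^ ν) hf
    (continuousOn_const.add (continuousOn_const.mul (hw.continuousOn_rpow ν))) hle hy
  rwa [hw.integral_const_add_mul_rpow hw.left_mem hy hy.1, ← add_assoc] at h

lemma abs_deriv_le_right_add_supAbs_mul (hw : EndpointWeight w w' a b k K)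
    (hf' : ∀ x ∈ Icc a b, HasDerivWithinAt f' (F x) (Icc a b) x) (hF : ContinuousOn F (Icc a b))
    (he : e + ν = 0) (hy : y ∈ Icc a b) :
    |f' y| ≤ |f' b| + supAbs a b (fun x => w x ^ e * F x) * ∫ t in y..b, w t ^ ν := by
  rw [← intervalIntegral.integral_const_mul]
  refine abs_le_abs_right_add_integral hf' (continuousOn_const.mul (hw.continuousOn_rpow ν))
    (fun x hx => ?_) hy
  rw [show ν = -e by linarith]
  exact abs_le_supAbs_mul_rpow_neg hw.continuousOn (fun _ => hw.pos) hF hx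

lemma abs_deriv_le_add_supAbs_mul_rpow (hw : EndpointWeight w w' a b k K)
    (hf' : ∀ x ∈ Icc a b, HasDerivWithinAt f' (F x) (Icc a b) x) (hF : ContinuousOn F (Icc a b))
    (he : e + ν = 1) (hν : ν < 0) (hy : y ∈ Icc a b) :
    |f' y| ≤ |f' b| + supAbs a b (fun x => w x ^ e * F x) / (k * -ν) * w y ^ ν := by
  have hM := supAbs_nonneg a b (fun x => w x ^ e * F x)
  have hint := hw.integral_rpow_le_of_lt_neg_one (ν := ν - 1) (by linarith) hy hw.right_mem hy.2
  rw [sub_add_cancel, show -1 - (ν - 1) = -ν by ring] at hint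
  calc |f' y| ≤ |f' b| + supAbs a b (fun x => w x ^ e * F x) * ∫ t in y..b, w t ^ (ν - 1) :=
        hw.abs_deriv_le_right_add_supAbs_mul hf' hF (by linarith) hy
    _ ≤ |f' b| + supAbs a b (fun x => w x ^ e * F x) * (w y ^ ν / (k * -ν)) := by gcongr
    _ = _ := by ring

variable {φ φ' : ℝ → ℝ} {y₁ z δ δ₁ γ W : ℝ}

lemma supAbs_rpow_mul_deriv_le (hw : EndpointWeight w w' a b k K)
    (hf' : ∀ x ∈ Icc a b, HasDerivWithinAt f' (F x) (Icc a b) x) (hF : ContinuousOn F (Icc a b))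
    {μ : ℝ} (hμ : 0 < μ) (he : e = μ + 1) (hW : ∀ y ∈ Icc a b, w y ≤ W) :
    supAbs a b (fun x => w x ^ μ * f' x)
      ≤ W ^ μ * |f' b| + supAbs a b (fun x => w x ^ e * F x) / (k * μ) := by
  set M := supAbs a b (fun x => w x ^ e * F x)
  refine supAbs_le hw.left_le_right fun y hy => ?_
  have hwy := hw.pos hy
  have hcancel : w y ^ μ * w y ^ (-μ) = 1 := by
    rw [← Real.rpow_add hwy, add_neg_cancel, Real.rpow_zero]
  have hderiv : |f' y| ≤ |f' b| + M / (k * μ) * w y ^ (-μ) := by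
    simpa using hw.abs_deriv_le_add_supAbs_mul_rpow hf' hF (ν := -μ) (by linarith) (by linarith) hy
  rw [abs_mul, abs_of_pos (Real.rpow_pos_of_pos hwy _)]
  calc w y ^ μ * |f' y| ≤ w y ^ μ * |f' b| + M / (k * μ) * (w y ^ μ * w y ^ (-μ)) := by
        refine (mul_le_mul_of_nonneg_left hderiv (by positivity)).trans_eq ?_
        ring
    _ ≤ W ^ μ * |f' b| + M / (k * μ) := by
        rw [hcancel, mul_one]
        gcongr
        exact hW y hy

lemma supAbs_self_le (hw : EndpointWeight w w' y₁ z k K)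
    (hφ : ∀ y ∈ Icc y₁ z, HasDerivWithinAt φ (φ' y) (Icc y₁ z) y)
    (hφ' : ∀ y ∈ Icc y₁ z, HasDerivWithinAt φ' (F y) (Icc y₁ z) y)
    (hF : ContinuousOn F (Icc y₁ z)) (hγ0 : 0 < γ) (hγ1 : γ < 1)
    (hδ₁ : z - y₁ ≤ δ₁) (hδ : δ₁ ≤ δ) {C : ℝ}
    (hC : K ^ γ / (k * γ) / (k * (1 - γ)) + 1 + δ ^ (1 - γ) ≤ C) :
    supAbs y₁ z φ ≤ C *
      (δ₁ ^ γ * supAbs y₁ z (fun y => w y ^ (2 - γ) * F y) + |φ z| + δ₁ ^ γ * |φ' z|) := by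
  set M := supAbs y₁ z (fun y => w y ^ (2 - γ) * F y)
  have hM : 0 ≤ M := supAbs_nonneg _ _ _
  have hk := hw.slope_pos
  have hK := hw.upper_pos
  have hδ₁0 : 0 ≤ δ₁ := by linarith [hw.left_le_right]
  have hδ0 : 0 ≤ δ := hδ₁0.trans hδ
  have hderiv : ∀ t ∈ Icc y₁ z, |φ' t| ≤ |φ' z| + M / (k * (1 - γ)) * w t ^ (γ - 1) :=
    fun t ht => by
      simpa using hw.abs_deriv_le_add_supAbs_mul_rpow hφ' hF (ν := γ - 1) (by ring) (by linarith) ht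
  refine supAbs_le hw.left_le_right fun y hy => ?_
  calc |φ y| ≤ |φ z| + (z - y) * |φ' z| + M / (k * (1 - γ)) * ∫ t in y..z, w t ^ (γ - 1) :=
        hw.abs_le_abs_right_add hφ hderiv hy
    _ ≤ |φ z| + δ ^ (1 - γ) * δ₁ ^ γ * |φ' z|
          + M / (k * (1 - γ)) * (K ^ γ / (k * γ) * δ₁ ^ γ) := by
        gcongr
        · exact le_rpow_one_sub_mul_rpow (by linarith [hy.2]) (by linarith [hy.1]) hδ hγ0.le
            hγ1.le
        · exact hw.integral_rpow_sub_one_le hγ0 hγ1.le hy hw.right_mem hy.2 (by linarith [hy.1])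
    _ = K ^ γ / (k * γ) / (k * (1 - γ)) * (δ₁ ^ γ * M) + 1 * |φ z|
          + δ ^ (1 - γ) * (δ₁ ^ γ * |φ' z|) := by ring
    _ ≤ _ := mul_add_mul_add_mul_le (by positivity) zero_le_one (by positivity) (by positivity)
          (abs_nonneg _) (by positivity) hC

lemma rpow_one_sub_mul_abs_le (hw : EndpointWeight w w' y₁ z k K)
    (hφ : ∀ y ∈ Icc y₁ z, HasDerivWithinAt φ (φ' y) (Icc y₁ z) y)
    (hφ' : ∀ y ∈ Icc y₁ z, HasDerivWithinAt φ' (F y) (Icc y₁ z) y)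
    (hF : ContinuousOn F (Icc y₁ z)) (hγ0 : 0 < γ) (hγ1 : γ < 1)
    (hδ₁ : z - y₁ ≤ δ₁) (hδ : δ₁ ≤ δ) (hW : ∀ y ∈ Icc y₁ z, w y ≤ W) {y : ℝ} (hy : y ∈ Icc y₁ z) :
    w y ^ (1 - γ) * |φ y|
      ≤ W ^ (1 - γ) * |φ z| + W ^ (1 - γ) * δ ^ (1 - γ) * (δ₁ ^ γ * |φ' z|)
        + K ^ γ / (k * γ) / (k * (2 - 2 * γ))
          * (δ₁ ^ γ * supAbs y₁ z (fun y => w y ^ (3 - 2 * γ) * F y)) := by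
  set M := supAbs y₁ z (fun y => w y ^ (3 - 2 * γ) * F y)
  have hk := hw.slope_pos
  have hK := hw.upper_pos
  have hwy := hw.pos hy
  have hδ₁0 : 0 ≤ δ₁ := by linarith [hw.left_le_right]
  have hδ0 : 0 ≤ δ := hδ₁0.trans hδ
  have hc : 0 ≤ M / (k * (2 - 2 * γ)) :=
    div_nonneg (supAbs_nonneg _ _ _) (mul_pos hk (by linarith)).le
  have hderiv : ∀ t ∈ Icc y₁ z, |φ' t| ≤ |φ' z| + M / (k * (2 - 2 * γ)) * w t ^ (2 * γ - 2) :=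
    fun t ht => by
      simpa using hw.abs_deriv_le_add_supAbs_mul_rpow hφ' hF (ν := 2 * γ - 2) (by ring)
        (by linarith) ht
  have hφy : |φ y| ≤ |φ z| + δ ^ (1 - γ) * δ₁ ^ γ * |φ' z|
      + M / (k * (2 - 2 * γ)) * (w y ^ (γ - 1) * (K ^ γ / (k * γ) * δ₁ ^ γ)) := by
    calc |φ y| ≤ |φ z| + (z - y) * |φ' z|
          + M / (k * (2 - 2 * γ)) * ∫ t in y..z, w t ^ (2 * γ - 2) :=
          hw.abs_le_abs_right_add hφ hderiv hy
      _ ≤ _ := by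
        gcongr
        · exact le_rpow_one_sub_mul_rpow (by linarith [hy.2]) (by linarith [hy.1]) hδ hγ0.le
            hγ1.le
        · rw [show 2 * γ - 2 = (γ - 1) + (γ - 1) by ring]
          refine (hw.integral_rpow_add_le_rpow_mul (by linarith) hy hw.right_mem hy.2).trans ?_
          gcongr
          exact hw.integral_rpow_sub_one_le hγ0 hγ1.le hy hw.right_mem hy.2 (by linarith [hy.1])
  have hcancel : w y ^ (1 - γ) * w y ^ (γ - 1) = 1 := by
    rw [← Real.rpow_add hwy, sub_add_sub_cancel', sub_self, Real.rpow_zero]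
  calc w y ^ (1 - γ) * |φ y|
      ≤ w y ^ (1 - γ) * (|φ z| + δ ^ (1 - γ) * δ₁ ^ γ * |φ' z|)
        + M / (k * (2 - 2 * γ)) * (K ^ γ / (k * γ) * δ₁ ^ γ) * (w y ^ (1 - γ) * w y ^ (γ - 1)) := by
        refine (mul_le_mul_of_nonneg_left hφy (by positivity)).trans_eq ?_
        ring
    _ ≤ W ^ (1 - γ) * (|φ z| + δ ^ (1 - γ) * δ₁ ^ γ * |φ' z|)
        + M / (k * (2 - 2 * γ)) * (K ^ γ / (k * γ) * δ₁ ^ γ) := by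
        rw [hcancel, mul_one]
        gcongr
        exact hW y hy
    _ = _ := by ring

lemma supAbs_rpow_one_sub_mul_add_le (hw : EndpointWeight w w' y₁ z k K)
    (hφ : ∀ y ∈ Icc y₁ z, HasDerivWithinAt φ (φ' y) (Icc y₁ z) y)
    (hφ' : ∀ y ∈ Icc y₁ z, HasDerivWithinAt φ' (F y) (Icc y₁ z) y)
    (hF : ContinuousOn F (Icc y₁ z)) (hγ0 : 0 < γ) (hγ1 : γ < 1)
    (hδ₁ : z - y₁ ≤ δ₁) (hδ : δ₁ ≤ δ) (hW : ∀ y ∈ Icc y₁ z, w y ≤ W) {C : ℝ}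
    (hC : K ^ γ / (k * γ) / (k * (2 - 2 * γ)) + 1 / (k * (2 - 2 * γ)) + W ^ (1 - γ)
          + (W ^ (1 - γ) * δ ^ (1 - γ) + W ^ (2 - 2 * γ)) ≤ C) :
    supAbs y₁ z (fun y => w y ^ (1 - γ) * φ y)
        + δ₁ ^ γ * supAbs y₁ z (fun y => w y ^ (2 - 2 * γ) * φ' y) ≤ C *
        (δ₁ ^ γ * supAbs y₁ z (fun y => w y ^ (3 - 2 * γ) * F y) + |φ z| + δ₁ ^ γ * |φ' z|) := by
  set M := supAbs y₁ z (fun y => w y ^ (3 - 2 * γ) * F y)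
  have hk := hw.slope_pos
  have hK := hw.upper_pos
  have hγ : 0 < 2 - 2 * γ := by linarith
  have hW0 : 0 < W := (hw.pos hw.right_mem).trans_le (hW z hw.right_mem)
  have hδ₁0 : 0 ≤ δ₁ := by linarith [hw.left_le_right]
  have hδ0 : 0 ≤ δ := hδ₁0.trans hδ
  have hM : 0 ≤ M := supAbs_nonneg _ _ _
  calc _ ≤ W ^ (1 - γ) * |φ z| + W ^ (1 - γ) * δ ^ (1 - γ) * (δ₁ ^ γ * |φ' z|)
        + K ^ γ / (k * γ) / (k * (2 - 2 * γ)) * (δ₁ ^ γ * M)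
        + δ₁ ^ γ * (W ^ (2 - 2 * γ) * |φ' z| + M / (k * (2 - 2 * γ))) := by
        gcongr
        · refine supAbs_le hw.left_le_right fun y hy => ?_
          rw [abs_mul, abs_of_pos (Real.rpow_pos_of_pos (hw.pos hy) _)]
          exact hw.rpow_one_sub_mul_abs_le hφ hφ' hF hγ0 hγ1 hδ₁ hδ hW hy
        · exact hw.supAbs_rpow_mul_deriv_le hφ' hF hγ (by ring) hW
    _ = (K ^ γ / (k * γ) / (k * (2 - 2 * γ)) + 1 / (k * (2 - 2 * γ))) * (δ₁ ^ γ * M)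
          + W ^ (1 - γ) * |φ z|
          + (W ^ (1 - γ) * δ ^ (1 - γ) + W ^ (2 - 2 * γ)) * (δ₁ ^ γ * |φ' z|) := by ring
    _ ≤ _ := mul_add_mul_add_mul_le (by positivity) (by positivity) (by positivity)
          (by positivity) (abs_nonneg (φ z)) (by positivity) hC

lemma rpow_sub_one_mul_abs_le (hw : EndpointWeight w w' y₁ z k K)
    (hφ : ∀ y ∈ Icc y₁ z, HasDerivWithinAt φ (φ' y) (Icc y₁ z) y)
    (hφ' : ∀ y ∈ Icc y₁ z, HasDerivWithinAt φ' (F y) (Icc y₁ z) y)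
    (hF : ContinuousOn F (Icc y₁ z)) (hγ0 : 0 < γ) (hγ1 : γ < 1)
    (hW : ∀ y ∈ Icc y₁ z, w y ≤ W) {y : ℝ} (hy : y ∈ Icc y₁ z) :
    w y ^ (γ - 1) * |φ y| ≤ w y₁ ^ (γ - 1) * |φ y₁| + W ^ γ / k * |φ' z|
      + 1 / (k * γ) / (k * (1 - γ)) * supAbs y₁ z (fun y => w y ^ (γ + 1) * F y) := by
  set M := supAbs y₁ z (fun y => w y ^ (γ + 1) * F y)
  have hM : 0 ≤ M := supAbs_nonneg _ _ _
  have hk := hw.slope_pos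
  have hwy := hw.pos hy
  have hwγ : 0 < w y ^ (γ - 1) := Real.rpow_pos_of_pos hwy _
  have hderiv : ∀ t ∈ Icc y₁ z, |φ' t| ≤ |φ' z| + M / (k * γ) * w t ^ (-γ) := fun t ht => by
    simpa using hw.abs_deriv_le_add_supAbs_mul_rpow hφ' hF (ν := -γ) (by ring) (by linarith) ht
  have hφy : |φ y| ≤ |φ y₁| + (y - y₁) * |φ' z|
      + M / (k * γ) * (w y ^ (1 - γ) / (k * (1 - γ))) := by
    have hint := hw.integral_rpow_le_of_neg_one_lt (ν := -γ) (by linarith) hw.left_mem hy hy.1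
    rw [show -γ + 1 = 1 - γ by ring] at hint
    calc |φ y| ≤ |φ y₁| + (y - y₁) * |φ' z| + M / (k * γ) * ∫ t in y₁..y, w t ^ (-γ) :=
          hw.abs_le_abs_left_add hφ hderiv hy
      _ ≤ _ := by gcongr
  have hdist : w y ^ (γ - 1) * (y - y₁) ≤ W ^ γ / k := by
    calc w y ^ (γ - 1) * (y - y₁) ≤ w y ^ (γ - 1) * (w y / k) := by
          gcongr; rw [le_div_iff₀ hk, mul_comm]; exact hw.mul_sub_left_le hy
      _ = w y ^ γ / k := by
          rw [mul_div_assoc', ← Real.rpow_add_one hwy.ne', sub_add_cancel]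
      _ ≤ W ^ γ / k := by gcongr; exact hW y hy
  have hcancel : w y ^ (γ - 1) * w y ^ (1 - γ) = 1 := by
    rw [← Real.rpow_add hwy, sub_add_sub_cancel', sub_self, Real.rpow_zero]
  have hleft := mul_le_mul_of_nonneg_right (Real.rpow_le_rpow_of_nonpos hw.left_pos
    (hw.monotoneOn hw.left_mem hy hy.1) (by linarith : γ - 1 ≤ 0)) (abs_nonneg (φ y₁))
  have hright := mul_le_mul_of_nonneg_right hdist (abs_nonneg (φ' z))
  calc w y ^ (γ - 1) * |φ y|
      ≤ w y ^ (γ - 1) * |φ y₁| + w y ^ (γ - 1) * (y - y₁) * |φ' z|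
        + 1 / (k * γ) / (k * (1 - γ)) * M * (w y ^ (γ - 1) * w y ^ (1 - γ)) := by
        refine (mul_le_mul_of_nonneg_left hφy hwγ.le).trans_eq ?_
        ring
    _ ≤ _ := by rw [hcancel, mul_one]; linarith

lemma supAbs_rpow_sub_one_mul_le (hw : EndpointWeight w w' y₁ z k K)
    (hφ : ∀ y ∈ Icc y₁ z, HasDerivWithinAt φ (φ' y) (Icc y₁ z) y)
    (hφ' : ∀ y ∈ Icc y₁ z, HasDerivWithinAt φ' (F y) (Icc y₁ z) y)
    (hF : ContinuousOn F (Icc y₁ z)) (hγ0 : 0 < γ) (hγ1 : γ < 1)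
    (hW : ∀ y ∈ Icc y₁ z, w y ≤ W) {C : ℝ} (hC : 1 / (k * γ) / (k * (1 - γ)) + 1 + W ^ γ / k ≤ C) :
    supAbs y₁ z (fun y => w y ^ (γ - 1) * φ y) ≤ C *
      (supAbs y₁ z (fun y => w y ^ (γ + 1) * F y) + w y₁ ^ (γ - 1) * |φ y₁| + |φ z| + |φ' z|) := by
  set M := supAbs y₁ z (fun y => w y ^ (γ + 1) * F y)
  have hk := hw.slope_pos
  have hγ1' : 0 < 1 - γ := by linarith
  have hW0 : 0 < W := (hw.pos hw.right_mem).trans_le (hW z hw.right_mem)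
  have hC0 : 0 ≤ C := le_trans (by positivity) hC
  refine supAbs_le hw.left_le_right fun y hy => ?_
  rw [abs_mul, abs_of_pos (Real.rpow_pos_of_pos (hw.pos hy) _)]
  calc w y ^ (γ - 1) * |φ y|
      ≤ 1 / (k * γ) / (k * (1 - γ)) * M + 1 * (w y₁ ^ (γ - 1) * |φ y₁|) + W ^ γ / k * |φ' z| := by
        linarith [hw.rpow_sub_one_mul_abs_le hφ hφ' hF hγ0 hγ1 hW hy]
    _ ≤ C * (M + w y₁ ^ (γ - 1) * |φ y₁| + |φ' z|) :=
        mul_add_mul_add_mul_le (by positivity) zero_le_one (by positivity) (supAbs_nonneg _ _ _)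
          (mul_nonneg (Real.rpow_pos_of_pos hw.left_pos _).le (abs_nonneg _)) (abs_nonneg _) hC
    _ ≤ _ := by nlinarith [mul_nonneg hC0 (abs_nonneg (φ z))]

lemma inv_mul_abs_le (hw : EndpointWeight w w' y₁ z k K)
    (hφ : ∀ y ∈ Icc y₁ z, HasDerivWithinAt φ (φ' y) (Icc y₁ z) y)
    (hφ' : ∀ y ∈ Icc y₁ z, HasDerivWithinAt φ' (F y) (Icc y₁ z) y)
    (hF : ContinuousOn F (Icc y₁ z)) (hγ0 : 0 < γ) (hγ1 : γ ≤ 1) (hδ₁ : z - y₁ ≤ δ₁)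
    {y : ℝ} (hy : y ∈ Icc y₁ z) :
    (w y)⁻¹ * |φ y| ≤ (w y₁)⁻¹ * |φ y₁|
      + 1 / k * (|φ' z|
        + K ^ γ / (k * γ) * δ₁ ^ γ * supAbs y₁ z (fun y => w y ^ (1 - γ) * F y)) := by
  set M := supAbs y₁ z (fun y => w y ^ (1 - γ) * F y)
  have hM : 0 ≤ M := supAbs_nonneg _ _ _
  have hk := hw.slope_pos
  have hK := hw.upper_pos
  have hwy := hw.pos hy
  have hδ₁0 : 0 ≤ δ₁ := by linarith [hw.left_le_right]
  have hderiv : ∀ t ∈ Icc y₁ z, |φ' t| ≤ |φ' z| + K ^ γ / (k * γ) * δ₁ ^ γ * M := by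
    intro t ht
    calc |φ' t| ≤ |φ' z| + M * ∫ s in t..z, w s ^ (γ - 1) :=
          hw.abs_deriv_le_right_add_supAbs_mul hφ' hF (by ring) ht
      _ ≤ |φ' z| + M * (K ^ γ / (k * γ) * δ₁ ^ γ) := by
          gcongr
          exact hw.integral_rpow_sub_one_le hγ0 hγ1 ht hw.right_mem ht.2 (by linarith [ht.1])
      _ = |φ' z| + K ^ γ / (k * γ) * δ₁ ^ γ * M := by ring
  have hφy : |φ y - φ y₁| ≤ (|φ' z| + K ^ γ / (k * γ) * δ₁ ^ γ * M) * (y - y₁) :=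
    norm_image_sub_le_of_norm_deriv_le_segment' hφ (fun t ht => hderiv t (Ico_subset_Icc_self ht))
      y hy
  have hslope : (w y)⁻¹ * (y - y₁) ≤ 1 / k := by
    rw [inv_mul_le_iff₀ hwy, mul_one_div, le_div_iff₀ hk, mul_comm]
    exact hw.mul_sub_left_le hy
  calc (w y)⁻¹ * |φ y| ≤ (w y)⁻¹ * |φ y₁|
        + (w y)⁻¹ * (y - y₁) * (|φ' z| + K ^ γ / (k * γ) * δ₁ ^ γ * M) := by
        rw [mul_assoc, ← mul_add]
        gcongr
        linarith [abs_sub_abs_le_abs_sub (φ y) (φ y₁)]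
    _ ≤ _ := by
        have := hw.left_pos
        have := hw.monotoneOn hw.left_mem hy hy.1
        gcongr

lemma supAbs_inv_mul_le (hw : EndpointWeight w w' y₁ z k K)
    (hφ : ∀ y ∈ Icc y₁ z, HasDerivWithinAt φ (φ' y) (Icc y₁ z) y)
    (hφ' : ∀ y ∈ Icc y₁ z, HasDerivWithinAt φ' (F y) (Icc y₁ z) y)
    (hF : ContinuousOn F (Icc y₁ z)) (hγ0 : 0 < γ) (hγ1 : γ ≤ 1) (hδ₁ : z - y₁ ≤ δ₁) {C : ℝ}
    (hC : K ^ γ / (k * γ) / k + 1 + 1 / k ≤ C) :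
    supAbs y₁ z (fun y => (w y)⁻¹ * φ y) ≤ C *
      (δ₁ ^ γ * supAbs y₁ z (fun y => w y ^ (1 - γ) * F y) + (w y₁)⁻¹ * |φ y₁| + |φ' z|) := by
  set M := supAbs y₁ z (fun y => w y ^ (1 - γ) * F y)
  have hk := hw.slope_pos
  have hK := hw.upper_pos
  have hδ₁0 : 0 ≤ δ₁ := by linarith [hw.left_le_right]
  refine supAbs_le hw.left_le_right fun y hy => ?_
  rw [abs_mul, abs_inv, abs_of_pos (hw.pos hy)]
  calc (w y)⁻¹ * |φ y|
      ≤ K ^ γ / (k * γ) / k * (δ₁ ^ γ * M) + 1 * ((w y₁)⁻¹ * |φ y₁|) + 1 / k * |φ' z| := by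
        refine (hw.inv_mul_abs_le hφ hφ' hF hγ0 hγ1 hδ₁ hy).trans_eq ?_
        ring
    _ ≤ _ := mul_add_mul_add_mul_le (by positivity) zero_le_one (by positivity)
          (mul_nonneg (by positivity) (supAbs_nonneg _ _ _))
          (mul_nonneg (inv_pos.2 hw.left_pos).le (abs_nonneg _)) (abs_nonneg _) hC

end EndpointWeight

lemma exists_endpointWeight {y₁ y₂ : ℝ} {u u' : ℝ → ℝ} (hy : y₁ < y₂)
    (hu'c : ContinuousWithinAt u' (Icc y₁ y₂) y₁)
    (hu : ∀ y ∈ Icc y₁ y₂, HasDerivWithinAt u (u' y) (Icc y₁ y₂) y)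
    (hmin : IsMinOn u (Icc y₁ y₂) y₁) (hu'0 : u' y₁ ≠ 0) :
    ∃ k > 0, ∃ δ ∈ Ioo 0 (y₂ - y₁), ∀ δ₁ ∈ Ioc 0 δ, ∀ c, 0 < u y₁ - c →
      EndpointWeight (fun y => u y - c) u' y₁ (y₁ + δ₁) k (3 * k) := by
  have hk0 : 0 < u' y₁ :=
    ((hu y₁ (left_mem_Icc.2 hy.le)).nonneg_of_isMinOn_Icc hy hmin).lt_of_ne' hu'0
  obtain ⟨δ, hδ, hu'⟩ := hu'c.exists_forall_Icc_mem hy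
    (Ioo_mem_nhds (half_lt_self hk0) (by linarith : u' y₁ < 3 * (u' y₁ / 2)))
  refine ⟨u' y₁ / 2, half_pos hk0, δ, hδ, fun δ₁ hδ₁ c hc => ?_⟩
  have hsub : Icc y₁ (y₁ + δ₁) ⊆ Icc y₁ (y₁ + δ) := Icc_subset_Icc_right (by linarith [hδ₁.2])
  have hsub₂ : Icc y₁ (y₁ + δ₁) ⊆ Icc y₁ y₂ := Icc_subset_Icc_right (by linarith [hδ₁.2, hδ.2])
  exact
    { hasDerivWithinAt := fun y hy => ((hu y (hsub₂ hy)).mono hsub₂).sub_const c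
      le_deriv := fun y hy => (hu' y (hsub hy)).1.le
      deriv_le := fun y hy => (hu' y (hsub hy)).2.le
      left_le_right := by linarith [hδ₁.1]
      slope_pos := half_pos hk0
      left_pos := hc }

theorem endpoint_sup_estimates_general
    (y₁ y₂ : ℝ) (hy : y₁ < y₂) (u u' u'' : ℝ → ℝ)
    (hu1 : ∀ y ∈ Set.Icc y₁ y₂, HasDerivWithinAt u (u' y) (Set.Icc y₁ y₂) y)
    (hu2 : ∀ y ∈ Set.Icc y₁ y₂, HasDerivWithinAt u' (u'' y) (Set.Icc y₁ y₂) y)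
    (humin : ∀ y ∈ Set.Icc y₁ y₂, u y₁ ≤ u y)
    (hu'0 : u' y₁ ≠ 0)
    (γ : ℝ) (hγ0 : 0 < γ) (hγ : γ ≤ 1 / 2) :
    ∃ C : ℝ, 0 < C ∧ ∃ δ ∈ Set.Ioo (0 : ℝ) (y₂ - y₁), ∀ δ₁ ∈ Set.Ioc (0 : ℝ) δ,
      ∀ c : ℝ, 0 < u y₁ - c → u y₁ - c < 1 →
      ∀ φ φ' F : ℝ → ℝ,
        (∀ y ∈ Set.Icc y₁ (y₁ + δ₁),
          HasDerivWithinAt φ (φ' y) (Set.Icc y₁ (y₁ + δ₁)) y) →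
        (∀ y ∈ Set.Icc y₁ (y₁ + δ₁),
          HasDerivWithinAt φ' (F y) (Set.Icc y₁ (y₁ + δ₁)) y) →
        ContinuousOn F (Set.Icc y₁ (y₁ + δ₁)) →
        (supAbs y₁ (y₁ + δ₁) φ
            ≤ C * (δ₁ ^ γ * supAbs y₁ (y₁ + δ₁) (fun y => (u y - c) ^ ((2 : ℝ) - γ) * F y)
                + |φ (y₁ + δ₁)| + δ₁ ^ γ * |φ' (y₁ + δ₁)|)) ∧
        (supAbs y₁ (y₁ + δ₁) (fun y => (u y - c) ^ ((1 : ℝ) - γ) * φ y)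
            + δ₁ ^ γ * supAbs y₁ (y₁ + δ₁) (fun y => (u y - c) ^ ((2 : ℝ) - 2 * γ) * φ' y)
            ≤ C * (δ₁ ^ γ * supAbs y₁ (y₁ + δ₁)
                    (fun y => (u y - c) ^ ((3 : ℝ) - 2 * γ) * F y)
                + |φ (y₁ + δ₁)| + δ₁ ^ γ * |φ' (y₁ + δ₁)|)) ∧
        (supAbs y₁ (y₁ + δ₁) (fun y => (u y - c) ^ (γ - 1) * φ y)
            ≤ C * (supAbs y₁ (y₁ + δ₁) (fun y => (u y - c) ^ (γ + 1) * F y)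
                + (u y₁ - c) ^ (γ - 1) * |φ y₁|
                + |φ (y₁ + δ₁)| + |φ' (y₁ + δ₁)|)) ∧
        (supAbs y₁ (y₁ + δ₁) (fun y => (u y - c)⁻¹ * φ y)
            ≤ C * (δ₁ ^ γ * supAbs y₁ (y₁ + δ₁) (fun y => (u y - c) ^ ((1 : ℝ) - γ) * F y)
                + (u y₁ - c)⁻¹ * |φ y₁| + |φ' (y₁ + δ₁)|)) := by
  obtain ⟨k, hk, δ, hδ, hweight⟩ := exists_endpointWeight hy
    (hu2 y₁ (left_mem_Icc.2 hy.le)).continuousWithinAt hu1 (isMinOn_iff.2 humin) hu'0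
  have hγ1 : γ < 1 := by linarith
  set W := 1 + 3 * k * δ
  set C₁ := (3 * k) ^ γ / (k * γ) / (k * (1 - γ)) + 1 + δ ^ (1 - γ)
  set C₂ := (3 * k) ^ γ / (k * γ) / (k * (2 - 2 * γ)) + 1 / (k * (2 - 2 * γ)) + W ^ (1 - γ)
    + (W ^ (1 - γ) * δ ^ (1 - γ) + W ^ (2 - 2 * γ))
  set C₃ := 1 / (k * γ) / (k * (1 - γ)) + 1 + W ^ γ / k
  set C₄ := (3 * k) ^ γ / (k * γ) / k + 1 + 1 / k
  refine ⟨max (max C₁ C₂) (max C₃ C₄), lt_max_of_lt_right (lt_max_of_lt_right (by positivity)),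
    δ, hδ, fun δ₁ hδ₁ c hc0 hc1 φ φ' F hφ hφ' hF => ?_⟩
  have hw := hweight δ₁ hδ₁ c hc0
  have hW : ∀ y ∈ Icc y₁ (y₁ + δ₁), u y - c ≤ W := fun y hy => by
    have := hw.le_left_add_mul hy
    have : 3 * k * (y₁ + δ₁ - y₁) ≤ 3 * k * δ := by gcongr; linarith [hδ₁.2]
    linarith
  have hlen : y₁ + δ₁ - y₁ ≤ δ₁ := (add_sub_cancel_left y₁ δ₁).le
  exact ⟨hw.supAbs_self_le hφ hφ' hF hγ0 hγ1 hlen hδ₁.2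
      (le_max_of_le_left (le_max_left _ _)),
    hw.supAbs_rpow_one_sub_mul_add_le hφ hφ' hF hγ0 hγ1 hlen hδ₁.2 hW
      (le_max_of_le_left (le_max_right _ _)),
    hw.supAbs_rpow_sub_one_mul_le hφ hφ' hF hγ0 hγ1 hW (le_max_of_le_right (le_max_left _ _)),
    hw.supAbs_inv_mul_le hφ hφ' hF hγ0 hγ1.le hlen (le_max_of_le_right (le_max_right _ _))⟩

/-- **Lemma 4.3**: let `u ∈ C²([y₁,y₂])` with `u(y₁) = u_min` and `u'(y₁) ≠ 0`, and fix
`γ ∈ (0,1/2]`.  There are constants `C > 0` and `δ ∈ (0, y₂−y₁)` such that for every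
`δ₁ ∈ (0,δ]`, `z = y₁+δ₁`, every `c` with `0 < u_min − c < 1` and every `φ ∈ C²([y₁,z])`
with `φ'' = F`, the four weighted sup-norm estimates (1)–(4) hold. -/
theorem endpoint_sup_estimates
    (y₁ y₂ : ℝ) (hy : y₁ < y₂) (u u' u'' : ℝ → ℝ)
    (hu1 : ∀ y ∈ Set.Icc y₁ y₂, HasDerivWithinAt u (u' y) (Set.Icc y₁ y₂) y)
    (hu2 : ∀ y ∈ Set.Icc y₁ y₂, HasDerivWithinAt u' (u'' y) (Set.Icc y₁ y₂) y)
    (hu2c : ContinuousOn u'' (Set.Icc y₁ y₂))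
    (humin : ∀ y ∈ Set.Icc y₁ y₂, u y₁ ≤ u y)
    (hu'0 : u' y₁ ≠ 0)
    (γ : ℝ) (hγ0 : 0 < γ) (hγ : γ ≤ 1 / 2) :
    ∃ C : ℝ, 0 < C ∧ ∃ δ ∈ Set.Ioo (0 : ℝ) (y₂ - y₁), ∀ δ₁ ∈ Set.Ioc (0 : ℝ) δ,
      ∀ c : ℝ, 0 < u y₁ - c → u y₁ - c < 1 →
      ∀ φ φ' F : ℝ → ℝ,
        (∀ y ∈ Set.Icc y₁ (y₁ + δ₁),
          HasDerivWithinAt φ (φ' y) (Set.Icc y₁ (y₁ + δ₁)) y) →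
        (∀ y ∈ Set.Icc y₁ (y₁ + δ₁),
          HasDerivWithinAt φ' (F y) (Set.Icc y₁ (y₁ + δ₁)) y) →
        ContinuousOn F (Set.Icc y₁ (y₁ + δ₁)) →
        (supAbs y₁ (y₁ + δ₁) φ
            ≤ C * (δ₁ ^ γ * supAbs y₁ (y₁ + δ₁) (fun y => (u y - c) ^ ((2 : ℝ) - γ) * F y)
                + |φ (y₁ + δ₁)| + δ₁ ^ γ * |φ' (y₁ + δ₁)|)) ∧
        (supAbs y₁ (y₁ + δ₁) (fun y => (u y - c) ^ ((1 : ℝ) - γ) * φ y)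
            + δ₁ ^ γ * supAbs y₁ (y₁ + δ₁) (fun y => (u y - c) ^ ((2 : ℝ) - 2 * γ) * φ' y)
            ≤ C * (δ₁ ^ γ * supAbs y₁ (y₁ + δ₁)
                    (fun y => (u y - c) ^ ((3 : ℝ) - 2 * γ) * F y)
                + |φ (y₁ + δ₁)| + δ₁ ^ γ * |φ' (y₁ + δ₁)|)) ∧
        (supAbs y₁ (y₁ + δ₁) (fun y => (u y - c) ^ (γ - 1) * φ y)
            ≤ C * (supAbs y₁ (y₁ + δ₁) (fun y => (u y - c) ^ (γ + 1) * F y)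
                + (u y₁ - c) ^ (γ - 1) * |φ y₁|
                + |φ (y₁ + δ₁)| + |φ' (y₁ + δ₁)|)) ∧
        (supAbs y₁ (y₁ + δ₁) (fun y => (u y - c)⁻¹ * φ y)
            ≤ C * (δ₁ ^ γ * supAbs y₁ (y₁ + δ₁) (fun y => (u y - c) ^ ((1 : ℝ) - γ) * F y)
                + (u y₁ - c)⁻¹ * |φ y₁| + |φ' (y₁ + δ₁)|)) :=
  endpoint_sup_estimates_general y₁ y₂ hy u u' u'' hu1 hu2 humin hu'0 γ hγ0 hγ
end
end

section
/- Let y₁ < y₂, let u : [y₁,y₂] → ℝ be twice continuously differentiable with u(y₁) = u_min := min_{[y₁,y₂]} u and u'(y₁) ≠ 0, and let α > 0 and β ∈ ℝ. Then there exists δ₀ ∈ (0, y₂−y₁) such that for every δ ∈ (0,δ₀] the following holds: if φ : (y₁, y₁+δ] → ℝ is twice continuously differentiable, satisfies −φ''(y) + ((u''(y)−β)/(u(y)−u_min)) φ(y) = −α² φ(y) for all y ∈ (y₁, y₁+δ], and ∫_{y₁}^{y₁+δ} φ(y)²/(y−y₁)³ dy < ∞, then both limits lim_{y→y₁⁺}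 φ(y) and lim_{y→y₁⁺} φ'(y) exist and are equal to 0. -/
/-!
Near `y₁` the equation reads `φ'' = q φ` with `q = O(1 / (y - y₁))`, since `u'(y₁) > 0` gives
`u y - u y₁ ≥ c (y - y₁)`. By AM-GM, `|φ| / (y - y₁) ≤ φ² / (y - y₁)³ + (y - y₁)`, so `φ''` is
integrable near `y₁`: `φ'` has a limit `L'`, hence is integrable too, and `φ` has a limit `L`.
If `L ≠ 0`, or if `L = 0` and `L' = lim φ / (y - y₁) ≠ 0` (l'Hôpital), then
`φ² / (y - y₁)³ ≥ c / (y - y₁)` near `y₁`, which is not integrable. The argument only sees a right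
neighbourhood of `y₁`, so every `δ₀` works.
-/

open Set Filter Topology MeasureTheory
open Asymptotics

section RightNeighbourhood

variable {a : ℝ} {E : Type*} [NormedAddCommGroup E] [NormedSpace ℝ E]

theorem stronglyMeasurableAtFilter_of_eventually_hasDerivAt [CompleteSpace E] {f f' : ℝ → E}
    {l : Filter ℝ} [l.IsMeasurablyGenerated] (hf : ∀ᶠ y in l, HasDerivAt f (f' y) y) :
    StronglyMeasurableAtFilter f' l := by
  obtain ⟨s, hsl, hs, hderiv⟩ := hf.exists_measurable_mem
  exact ⟨s, hsl, (aestronglyMeasurable_deriv f _).congr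
    (ae_restrict_of_forall_mem hs fun y hy => (hderiv y hy).deriv)⟩

theorem eventually_hasDerivAt_of_hasDerivWithinAt_Ioc {f f' : ℝ → E} {b : ℝ} (hab : a < b)
    (hf : ∀ y ∈ Ioc a b, HasDerivWithinAt f (f' y) (Ioc a b) y) :
    ∀ᶠ y in 𝓝[>] a, HasDerivAt f (f' y) y := by
  filter_upwards [Ioo_mem_nhdsGT hab] with y hy
  exact (hf y (Ioo_subset_Ioc_self hy)).hasDerivAt (Ioc_mem_nhds hy.1 hy.2)

theorem exists_tendsto_nhdsGT_of_integrableAtFilter_deriv [CompleteSpace E] {f f' : ℝ → E}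
    (hf : ∀ᶠ y in 𝓝[>] a, HasDerivAt f (f' y) y) (hf' : IntegrableAtFilter f' (𝓝[>] a)) :
    ∃ L, Tendsto f (𝓝[>] a) (𝓝 L) := by
  obtain ⟨s, hs, hint⟩ := hf'
  obtain ⟨c, hac, hc⟩ := mem_nhdsGT_iff_exists_Ioo_subset.1 (hf.and hs)
  obtain ⟨d, had, hdc⟩ := exists_between (mem_Ioi.1 hac)
  have hint_d : IntegrableOn f' (Icc a d) :=
    (integrableOn_Icc_iff_integrableOn_Ioc enorm_ne_top).2
      (hint.mono_set fun y hy => (hc ⟨hy.1, hy.2.trans_lt hdc⟩).2)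
  have hprim : Tendsto (fun y => ∫ t in y..d, f' t) (𝓝[>] a) (𝓝 (∫ t in a..d, f' t)) := by
    have := intervalIntegral.continuousOn_primitive_interval_left
      (by rwa [uIcc_of_le had.le] : IntegrableOn f' (uIcc a d))
    rw [uIcc_of_le had.le] at this
    exact (this a (left_mem_Icc.2 had.le)).tendsto.mono_left
      (nhdsWithin_le_of_mem (Icc_mem_nhdsGT had))
  refine ⟨f d - ∫ t in a..d, f' t, (tendsto_const_nhds.sub hprim).congr' ?_⟩
  filter_upwards [Ioo_mem_nhdsGT had] with y hy
  have hyd : uIcc y d = Icc y d := uIcc_of_le hy.2.le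
  have hsub : Icc y d ⊆ Ioo a c := fun t ht => ⟨hy.1.trans_le ht.1, ht.2.trans_lt hdc⟩
  rw [intervalIntegral.integral_eq_sub_of_hasDerivAt (fun t ht => (hc (hsub (hyd ▸ ht))).1)
    (hint_d.mono_set (hyd ▸ Icc_subset_Icc_left hy.1.le)).intervalIntegrable, sub_sub_cancel]

theorem not_integrableAtFilter_nhdsGT_of_sub_inv_isBigO {F : Type*} [NormedAddCommGroup F]
    {g : ℝ → F} (hg : (fun x => (x - a)⁻¹) =O[𝓝[>] a] g) :
    ¬ IntegrableAtFilter g (𝓝[>] a) := by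
  rintro ⟨s, hs, hint⟩
  have hlog : ∀ᶠ x in 𝓝[>] a, HasDerivAt (fun x => Real.log (x - a)) (x - a)⁻¹ x := by
    filter_upwards [self_mem_nhdsWithin] with x (hx : a < x)
    simpa using ((hasDerivAt_id x).sub_const a).log (sub_pos.2 hx).ne'
  have hsub : Tendsto (fun x => x - a) (𝓝[>] a) (𝓝[>] 0) := by
    refine tendsto_nhdsWithin_of_tendsto_nhds_of_eventually_within _ ?_ ?_
    · simpa using ((continuous_sub_right a).tendsto a).mono_left nhdsWithin_le_nhds
    · filter_upwards [self_mem_nhdsWithin] with x (hx : a < x) using sub_pos.2 hx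
  exact not_integrableOn_of_tendsto_norm_atTop_of_deriv_isBigO_filter _ hs
    (hlog.mono fun x hx => hx.differentiableAt)
    (tendsto_abs_atBot_atTop.comp (Real.tendsto_log_nhdsGT_zero.comp hsub))
    (hg.congr' (hlog.mono fun x hx => hx.deriv.symm) EventuallyEq.rfl) hint

theorem not_integrableAtFilter_sq_div_pow_three {φ : ℝ → ℝ} {c : ℝ} (hc : 0 < c)
    (h : ∀ᶠ y in 𝓝[>] a, c ≤ |φ y / (y - a)|) :
    ¬ IntegrableAtFilter (fun y => φ y ^ 2 / (y - a) ^ 3) (𝓝[>] a) := by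
  refine not_integrableAtFilter_nhdsGT_of_sub_inv_isBigO (IsBigO.of_bound (c ^ 2)⁻¹ ?_)
  filter_upwards [h, self_mem_nhdsWithin] with y hy hya
  have hya : 0 < y - a := sub_pos.2 hya
  have hsq : c ^ 2 ≤ (φ y / (y - a)) ^ 2 := by
    rw [← sq_abs (φ y / (y - a))]; exact pow_le_pow_left₀ hc.le hy 2
  have hsplit : φ y ^ 2 / (y - a) ^ 3 = (φ y / (y - a)) ^ 2 * (y - a)⁻¹ := by
    field_simp
  rw [Real.norm_of_nonneg (inv_pos.2 hya).le, hsplit,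
    Real.norm_of_nonneg (by positivity), ← mul_assoc]
  calc (y - a)⁻¹ = (c ^ 2)⁻¹ * c ^ 2 * (y - a)⁻¹ := by field_simp
    _ ≤ (c ^ 2)⁻¹ * (φ y / (y - a)) ^ 2 * (y - a)⁻¹ := by gcongr

theorem Asymptotics.IsBigO.integrableAtFilter_of_sq_div_pow_three {φ ψ : ℝ → ℝ}
    (hψ : ψ =O[𝓝[>] a] fun y => φ y / (y - a)) (hψm : StronglyMeasurableAtFilter ψ (𝓝[>] a))
    (hint : IntegrableAtFilter (fun y => φ y ^ 2 / (y - a) ^ 3) (𝓝[>] a)) :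
    IntegrableAtFilter ψ (𝓝[>] a) := by
  have hlin : IntegrableAtFilter (fun y => y - a) (𝓝[>] a) :=
    ((continuous_sub_right a).integrableAt_nhds a).filter_mono nhdsWithin_le_nhds
  refine (hψ.trans (IsBigO.of_bound 1 ?_)).integrableAtFilter hψm (hint.add hlin)
  filter_upwards [self_mem_nhdsWithin] with y hy
  have hya : 0 < y - a := sub_pos.2 hy
  -- AM-GM: `|φ| / t ≤ φ² / t³ + t`
  rw [one_mul, Real.norm_eq_abs, abs_div, abs_of_pos hya, Pi.add_apply,
    Real.norm_of_nonneg (by positivity), div_add' _ _ _ (by positivity),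
    div_le_div_iff₀ hya (by positivity)]
  nlinarith [sq_nonneg (|φ y| - (y - a) ^ 2), abs_nonneg (φ y), sq_abs (φ y), pow_pos hya 3]

theorem tendsto_zero_of_integrableAtFilter_sq_div_pow_three {φ φ' φ'' q : ℝ → ℝ}
    (hφ : ∀ᶠ y in 𝓝[>] a, HasDerivAt φ (φ' y) y) (hφ' : ∀ᶠ y in 𝓝[>] a, HasDerivAt φ' (φ'' y) y)
    (hq : q =O[𝓝[>] a] fun y => (y - a)⁻¹) (hode : ∀ᶠ y in 𝓝[>] a, φ'' y = q y * φ y)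
    (hint : IntegrableAtFilter (fun y => φ y ^ 2 / (y - a) ^ 3) (𝓝[>] a)) :
    Tendsto φ (𝓝[>] a) (𝓝 0) ∧ Tendsto φ' (𝓝[>] a) (𝓝 0) := by
  have hφ''O : φ'' =O[𝓝[>] a] fun y => φ y / (y - a) :=
    (hq.mul (isBigO_refl φ _)).congr' (hode.mono fun y hy => hy.symm)
      (Eventually.of_forall fun y => inv_mul_eq_div _ _)
  obtain ⟨L', hL'⟩ := exists_tendsto_nhdsGT_of_integrableAtFilter_deriv hφ'
    (hφ''O.integrableAtFilter_of_sq_div_pow_three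
      (stronglyMeasurableAtFilter_of_eventually_hasDerivAt hφ') hint)
  obtain ⟨L, hL⟩ := exists_tendsto_nhdsGT_of_integrableAtFilter_deriv hφ
    (hL'.integrableAtFilter (stronglyMeasurableAtFilter_of_eventually_hasDerivAt hφ)
      (volume.finiteAt_nhdsWithin _ _))
  obtain rfl : L = 0 := by
    by_contra hL0
    refine not_integrableAtFilter_sq_div_pow_three (half_pos (abs_pos.2 hL0)) ?_ hint
    filter_upwards [hL.abs.eventually (lt_mem_nhds (half_lt_self (abs_pos.2 hL0))),
      Ioc_mem_nhdsGT (lt_add_one a)] with y hy hya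
    rw [abs_div, abs_of_pos (sub_pos.2 hya.1)]
    exact hy.le.trans (le_div_self (abs_nonneg _) (sub_pos.2 hya.1) (by linarith [hya.2]))
  have hslope : Tendsto (fun y => φ y / (y - a)) (𝓝[>] a) (𝓝 L') :=
    HasDerivAt.lhopital_zero_nhdsGT hφ
      (Eventually.of_forall fun y => (hasDerivAt_id y).sub_const a)
      (Eventually.of_forall fun _ => one_ne_zero) hL
      (by simpa using ((continuous_sub_right a).tendsto a).mono_left nhdsWithin_le_nhds)
      (by simpa using hL')
  obtain rfl : L' = 0 := by
    by_contra hL0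
    exact not_integrableAtFilter_sq_div_pow_three (half_pos (abs_pos.2 hL0))
      ((hslope.abs.eventually (lt_mem_nhds (half_lt_self (abs_pos.2 hL0)))).mono
        fun _ h => h.le) hint
  exact ⟨hL, hL'⟩

theorem HasDerivWithinAt.nonneg_of_eventually_le {u : ℝ → ℝ} {d : ℝ}
    (hu : HasDerivWithinAt u d (Ioi a) a) (hmin : ∀ᶠ y in 𝓝[>] a, u a ≤ u y) : 0 ≤ d := by
  have hslope : Tendsto (slope u a) (𝓝[>] a) (𝓝 d) :=
    (hasDerivWithinAt_iff_tendsto_slope' (lt_irrefl a)).1 hu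
  refine ge_of_tendsto hslope ?_
  filter_upwards [hmin, self_mem_nhdsWithin] with y hy (hya : a < y)
  rw [slope_def_field]
  exact div_nonneg (sub_nonneg.2 hy) (sub_pos.2 hya).le

theorem HasDerivWithinAt.eventually_mul_sub_lt {u : ℝ → ℝ} {c d : ℝ}
    (hu : HasDerivWithinAt u d (Ioi a) a) (hc : c < d) :
    ∀ᶠ y in 𝓝[>] a, c * (y - a) < u y - u a := by
  filter_upwards [((hasDerivWithinAt_iff_tendsto_slope' (lt_irrefl a)).1 hu).eventually
    (lt_mem_nhds hc), self_mem_nhdsWithin] with y hy (hya : a < y)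
  rwa [slope_def_field, lt_div_iff₀ (sub_pos.2 hya)] at hy

theorem Asymptotics.IsBigO.div_sub_of_hasDerivWithinAt {u N : ℝ → ℝ} {d : ℝ}
    (hN : N =O[𝓝[>] a] fun _ => (1 : ℝ)) (hu : HasDerivWithinAt u d (Ioi a) a) (hd : 0 < d) :
    (fun y => N y / (u y - u a)) =O[𝓝[>] a] fun y => (y - a)⁻¹ := by
  have hinv : (fun y => (u y - u a)⁻¹) =O[𝓝[>] a] fun y => (y - a)⁻¹ := by
    refine IsBigO.of_bound (d / 2)⁻¹ ?_
    filter_upwards [hu.eventually_mul_sub_lt (half_lt_self hd), self_mem_nhdsWithin]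
      with y hy (hya : a < y)
    have hya : 0 < y - a := sub_pos.2 hya
    rw [norm_inv, norm_inv, Real.norm_of_nonneg (by nlinarith), Real.norm_of_nonneg hya.le,
      ← mul_inv]
    exact inv_anti₀ (by positivity) hy.le
  simpa only [one_mul, div_eq_mul_inv] using hN.mul hinv

theorem isBigO_const_inv_sub (c : ℝ) : (fun _ => c) =O[𝓝[>] a] fun y => (y - a)⁻¹ := by
  refine (isBigO_const_one ℝ c _).trans
    ((isBigO_const_left_iff_pos_le_norm one_ne_zero).2 ⟨1, one_pos, ?_⟩)
  filter_upwards [Ioc_mem_nhdsGT (lt_add_one a)] with y hy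
  rw [norm_inv, Real.norm_of_nonneg (sub_pos.2 hy.1).le]
  exact one_le_inv₀ (sub_pos.2 hy.1) |>.2 (by linarith [hy.2])

end RightNeighbourhood

theorem solution_vanishes_at_endpoint_general
    (y₁ y₂ : ℝ) (hy : y₁ < y₂) (u u' u'' : ℝ → ℝ)
    (hu1 : ∀ y ∈ Set.Icc y₁ y₂, HasDerivWithinAt u (u' y) (Set.Icc y₁ y₂) y)
    (hu2c : ContinuousOn u'' (Set.Icc y₁ y₂))
    (humin : ∀ y ∈ Set.Icc y₁ y₂, u y₁ ≤ u y)
    (hu'0 : u' y₁ ≠ 0)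
    (α β : ℝ) :
    ∃ δ₀ ∈ Set.Ioo (0 : ℝ) (y₂ - y₁), ∀ δ ∈ Set.Ioc (0 : ℝ) δ₀,
      ∀ φ φ' φ'' : ℝ → ℝ,
        (∀ y ∈ Set.Ioc y₁ (y₁ + δ),
          HasDerivWithinAt φ (φ' y) (Set.Ioc y₁ (y₁ + δ)) y) →
        (∀ y ∈ Set.Ioc y₁ (y₁ + δ),
          HasDerivWithinAt φ' (φ'' y) (Set.Ioc y₁ (y₁ + δ)) y) →
        ContinuousOn φ'' (Set.Ioc y₁ (y₁ + δ)) →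
        (∀ y ∈ Set.Ioc y₁ (y₁ + δ),
          -φ'' y + ((u'' y - β) / (u y - u y₁)) * φ y = -α ^ 2 * φ y) →
        IntegrableOn (fun y => (φ y) ^ 2 / (y - y₁) ^ 3) (Set.Ioo y₁ (y₁ + δ)) →
        Tendsto φ (𝓝[>] y₁) (𝓝 0) ∧ Tendsto φ' (𝓝[>] y₁) (𝓝 0) := by
  have hIcc : Icc y₁ y₂ ∈ 𝓝[>] y₁ := Icc_mem_nhdsGT hy
  have hu : HasDerivWithinAt u (u' y₁) (Ioi y₁) y₁ :=
    (hu1 y₁ (left_mem_Icc.2 hy.le)).mono_of_mem_nhdsWithin hIcc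
  have hu'pos : 0 < u' y₁ :=
    (hu.nonneg_of_eventually_le (mem_of_superset hIcc humin)).lt_of_ne' hu'0
  have hu''β : (fun y => u'' y - β) =O[𝓝[>] y₁] fun _ => (1 : ℝ) :=
    (((hu2c y₁ (left_mem_Icc.2 hy.le)).mono_of_mem_nhdsWithin hIcc).tendsto.sub_const β).isBigO_one
      ℝ
  have hq : (fun y => (u'' y - β) / (u y - u y₁) + α ^ 2) =O[𝓝[>] y₁] fun y => (y - y₁)⁻¹ :=
    (hu''β.div_sub_of_hasDerivWithinAt hu hu'pos).add (isBigO_const_inv_sub _)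
  refine ⟨(y₂ - y₁) / 2, ⟨by linarith, by linarith⟩, fun δ hδ φ φ' φ'' hφ hφ' _ hode hint => ?_⟩
  have hδ : y₁ < y₁ + δ := by linarith [hδ.1]
  refine tendsto_zero_of_integrableAtFilter_sq_div_pow_three
    (eventually_hasDerivAt_of_hasDerivWithinAt_Ioc hδ hφ)
    (eventually_hasDerivAt_of_hasDerivWithinAt_Ioc hδ hφ') hq ?_ ⟨_, Ioo_mem_nhdsGT hδ, hint⟩
  filter_upwards [Ioc_mem_nhdsGT hδ] with y hy
  linear_combination -hode y hy

/-- **Endpoint vanishing** (from the proof of Theorem 2.12): let `u ∈ C²([y₁,y₂])` with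
`u(y₁) = u_min` and `u'(y₁) ≠ 0`, and let `α > 0`, `β ∈ ℝ`.  Then there is
`δ₀ ∈ (0, y₂−y₁)` such that for every `δ ∈ (0,δ₀]`: any `C²` solution `φ` of
`−φ'' + ((u''−β)/(u−u_min))φ = −α²φ` on `(y₁, y₁+δ]` with
`∫_{y₁}^{y₁+δ} φ²/(y−y₁)³ dy < ∞` satisfies `φ(y) → 0` and `φ'(y) → 0` as `y → y₁⁺`. -/
theorem solution_vanishes_at_endpoint
    (y₁ y₂ : ℝ) (hy : y₁ < y₂) (u u' u'' : ℝ → ℝ)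
    (hu1 : ∀ y ∈ Set.Icc y₁ y₂, HasDerivWithinAt u (u' y) (Set.Icc y₁ y₂) y)
    (hu2 : ∀ y ∈ Set.Icc y₁ y₂, HasDerivWithinAt u' (u'' y) (Set.Icc y₁ y₂) y)
    (hu2c : ContinuousOn u'' (Set.Icc y₁ y₂))
    (humin : ∀ y ∈ Set.Icc y₁ y₂, u y₁ ≤ u y)
    (hu'0 : u' y₁ ≠ 0)
    (α β : ℝ) (hα : 0 < α) :
    ∃ δ₀ ∈ Set.Ioo (0 : ℝ) (y₂ - y₁), ∀ δ ∈ Set.Ioc (0 : ℝ) δ₀,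
      ∀ φ φ' φ'' : ℝ → ℝ,
        (∀ y ∈ Set.Ioc y₁ (y₁ + δ),
          HasDerivWithinAt φ (φ' y) (Set.Ioc y₁ (y₁ + δ)) y) →
        (∀ y ∈ Set.Ioc y₁ (y₁ + δ),
          HasDerivWithinAt φ' (φ'' y) (Set.Ioc y₁ (y₁ + δ)) y) →
        ContinuousOn φ'' (Set.Ioc y₁ (y₁ + δ)) →
        (∀ y ∈ Set.Ioc y₁ (y₁ + δ),
          -φ'' y + ((u'' y - β) / (u y - u y₁)) * φ y = -α ^ 2 * φ y) →
        IntegrableOn (fun y => (φ y) ^ 2 / (y - y₁) ^ 3) (Set.Ioo y₁ (y₁ + δ)) →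
        Tendsto φ (𝓝[>] y₁) (𝓝 0) ∧ Tendsto φ' (𝓝[>] y₁) (𝓝 0) :=
  solution_vanishes_at_endpoint_general y₁ y₂ hy u u' u'' hu1 hu2c humin hu'0 α β
end
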